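/- Completeness of NSMB: if a nested-sequent Γ ⇒ Δ, T is valid, then Γ ⇒ Δ, T is provable in NSMB. -/
import Mathlib


set_option maxHeartbeats 1000000

namespace MBQL

/-- The fixed finite set `J ⊆ [0,1]` of inner-product values, with `0, 1 ∈ J`. -/
structure MBParams where
  J : Set ℝ
  finite : J.Finite
  subI : J ⊆ Set.Icc (0:ℝ) 1
  zero_mem : (0:ℝ) ∈ J
  one_mem : (1:ℝ) ∈ J

/-- Formulas of **MB**: `A ::= p | ⊤ | ⊥ | ¬A | A∧A | □^c_α A | □^o_α A` (α ∈ J). -/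
inductive MBForm (Pm : MBParams) : Type
  | var : ℕ → MBForm Pm
  | top : MBForm Pm
  | bot : MBForm Pm
  | neg : MBForm Pm → MBForm Pm
  | conj : MBForm Pm → MBForm Pm → MBForm Pm
  | boxc : Pm.J → MBForm Pm → MBForm Pm
  | boxo : Pm.J → MBForm Pm → MBForm Pm

noncomputable instance {Pm : MBParams} : DecidableEq (MBForm Pm) := Classical.decEq _

/-- Valuation of a formula, given worlds `S`, a relation `R : S → S → ℝ` and a
valuation `V` of the propositional variables. -/
def MBForm.valR {Pm : MBParams} {S : Type} (R : S → S → ℝ) (V : ℕ → Set S) :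
    MBForm Pm → Set S
  | .var n => V n
  | .top => Set.univ
  | .bot => ∅
  | .neg A => (A.valR R V)ᶜ
  | .conj A B => A.valR R V ∩ B.valR R V
  | .boxc α A => {s | ∀ t, (α : ℝ) ≤ R s t → t ∈ A.valR R V}
  | .boxo α A => {s | ∀ t, (α : ℝ) < R s t → t ∈ A.valR R V}

/-- An EQL-frame. -/
structure EQLFrame where
  S : Type
  nonempty : Nonempty S
  R : S → S → ℝ
  mem_Icc : ∀ s t, R s t ∈ Set.Icc (0:ℝ) 1
  eq_one_iff : ∀ s t, (R s t = 1 ↔ s = t)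
  symm : ∀ s t, R s t = R t s

/-- An MB-realization. -/
structure MBRealization (Pm : MBParams) where
  F : EQLFrame
  P : Set (Set F.S)
  univ_mem : Set.univ ∈ P
  empty_mem : ∅ ∈ P
  inter_mem : ∀ X ∈ P, ∀ Y ∈ P, X ∩ Y ∈ P
  compl_mem : ∀ X ∈ P, Xᶜ ∈ P
  boxc_mem : ∀ α ∈ Pm.J, ∀ X ∈ P, {s | ∀ t, α ≤ F.R s t → t ∈ X} ∈ P
  boxo_mem : ∀ α ∈ Pm.J, ∀ X ∈ P, {s | ∀ t, α < F.R s t → t ∈ X} ∈ P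
  V : ℕ → Set F.S
  V_mem : ∀ n, V n ∈ P

/-- The extended valuation of a formula in an MB-realization. -/
def MBRealization.val {Pm : MBParams} (M : MBRealization Pm) (A : MBForm Pm) :
    Set M.F.S := A.valR M.F.R M.V

/-- Validity of an MB-formula. -/
def MBValid {Pm : MBParams} (A : MBForm Pm) : Prop :=
  ∀ (M : MBRealization Pm) (s : M.F.S), s ∈ M.val A

inductive Side : Type
  | c : Side
  | o : Side
deriving DecidableEq

/-- A label `(α, d)` on a modal bracket, with `α ∈ J − {1}`. -/
structure MBLab (Pm : MBParams) where
  α : ℝ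
  memJ : α ∈ Pm.J
  ne_one : α ≠ 1
  d : Side

mutual
/-- Nested-sequents: a finite tree whose nodes are sequents (pairs of finite
sets of formulas) and whose edges carry labels. -/
inductive NSeq (Pm : MBParams) : Type
  | node : Finset (MBForm Pm) → Finset (MBForm Pm) → NSeqs Pm → NSeq Pm
/-- A finite list of labelled child nested-sequents. -/
inductive NSeqs (Pm : MBParams) : Type
  | nil : NSeqs Pm
  | cons : MBLab Pm → NSeq Pm → NSeqs Pm → NSeqs Pm
end

/-- The `i`-th labelled child. -/
def NSeqs.get {Pm : MBParams} : NSeqs Pm → ℕ → Option (MBLab Pm × NSeq Pm)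
  | .nil, _ => none
  | .cons l t _, 0 => some (l, t)
  | .cons _ _ ts, n+1 => ts.get n

/-- `SubAt t p u`: the subtree of `t` at the path (node address) `p` is `u`. -/
inductive SubAt {Pm : MBParams} : NSeq Pm → List ℕ → NSeq Pm → Prop
  | here (t : NSeq Pm) : SubAt t [] t
  | there {Γ Δ : Finset (MBForm Pm)} {ts : NSeqs Pm} {i : ℕ} {l : MBLab Pm}
      {u v : NSeq Pm} {p : List ℕ} :
      NSeqs.get ts i = some (l, u) → SubAt u p v → SubAt (.node Γ Δ ts) (i :: p) v

/-- `p` is (the address of) a node of `t`. -/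
def IsNode {Pm : MBParams} (t : NSeq Pm) (p : List ℕ) : Prop := ∃ u, SubAt t p u

mutual
/-- Replace the sequent at the node with address `p` by `Γ' ⇒ Δ'`
(children are kept). -/
def NSeq.setSeq {Pm : MBParams} :
    NSeq Pm → List ℕ → Finset (MBForm Pm) → Finset (MBForm Pm) → NSeq Pm
  | .node _ _ ts, [], Γ', Δ' => .node Γ' Δ' ts
  | .node Γ Δ ts, i :: p, Γ', Δ' => .node Γ Δ (NSeqs.setSeqs ts i p Γ' Δ')
def NSeqs.setSeqs {Pm : MBParams} :
    NSeqs Pm → ℕ → List ℕ → Finset (MBForm Pm) → Finset (MBForm Pm) → NSeqs Pm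
  | .nil, _, _, _, _ => .nil
  | .cons l t ts, 0, p, Γ', Δ' => .cons l (t.setSeq p Γ' Δ') ts
  | .cons l t ts, n+1, p, Γ', Δ' => .cons l t (NSeqs.setSeqs ts n p Γ' Δ')
end

/-- Append a labelled child at the end of a children list. -/
def NSeqs.snoc {Pm : MBParams} : NSeqs Pm → MBLab Pm → NSeq Pm → NSeqs Pm
  | .nil, l, u => .cons l u .nil
  | .cons l' t ts, l, u => .cons l' t (ts.snoc l u)

mutual
/-- Add a new child `[u]_l` at the node with address `p`. -/
def NSeq.addChild {Pm : MBParams} : NSeq Pm → List ℕ → MBLab Pm → NSeq Pm → NSeq Pm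
  | .node Γ Δ ts, [], l, u => .node Γ Δ (ts.snoc l u)
  | .node Γ Δ ts, i :: p, l, u => .node Γ Δ (NSeqs.addChilds ts i p l u)
def NSeqs.addChilds {Pm : MBParams} : NSeqs Pm → ℕ → List ℕ → MBLab Pm → NSeq Pm → NSeqs Pm
  | .nil, _, _, _, _ => .nil
  | .cons l' t ts, 0, p, l, u => .cons l' (t.addChild p l u) ts
  | .cons l' t ts, n+1, p, l, u => .cons l' t (NSeqs.addChilds ts n p l u)
end


/-- Logical connectives defined by abbreviation: `A ∨ B`. -/
def MBForm.or {Pm : MBParams} (A B : MBForm Pm) : MBForm Pm := .neg (.conj (.neg A) (.neg B))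

/-- `A → B := ¬A ∨ B`. -/
def MBForm.imp {Pm : MBParams} (A B : MBForm Pm) : MBForm Pm := (MBForm.neg A).or B

/-- Conjunction of a list of formulas. -/
def conjList {Pm : MBParams} : List (MBForm Pm) → MBForm Pm
  | [] => .top
  | [A] => A
  | A :: B :: rest => .conj A (conjList (B :: rest))

/-- Disjunction of a list of formulas. -/
def disjList {Pm : MBParams} : List (MBForm Pm) → MBForm Pm
  | [] => .bot
  | [A] => A
  | A :: B :: rest => (A).or (disjList (B :: rest))

/-- `⋀Γ → ⋁Δ`. -/
noncomputable def seqForm {Pm : MBParams} (Γ Δ : Finset (MBForm Pm)) : MBForm Pm :=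
  (conjList Γ.toList).imp (disjList Δ.toList)

/-- The box corresponding to a bracket label. -/
def MBLab.box {Pm : MBParams} (l : MBLab Pm) (A : MBForm Pm) : MBForm Pm :=
  match l.d with
  | .c => .boxc ⟨l.α, l.memJ⟩ A
  | .o => .boxo ⟨l.α, l.memJ⟩ A

mutual
/-- The interpretation `τ` of a nested-sequent as a formula. -/
noncomputable def NSeq.tau {Pm : MBParams} : NSeq Pm → MBForm Pm
  | .node Γ Δ ts => NSeqs.tauAux (seqForm Γ Δ) ts
noncomputable def NSeqs.tauAux {Pm : MBParams} : MBForm Pm → NSeqs Pm → MBForm Pm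
  | A, .nil => A
  | A, .cons l t ts => NSeqs.tauAux (A.or (l.box t.tau)) ts
end

/-- `E` is an embedding of the nested-sequent `t` into the realization `M`
(`E` is given on node addresses). -/
def IsEmb {Pm : MBParams} (M : MBRealization Pm) (t : NSeq Pm)
    (E : List ℕ → M.F.S) : Prop :=
  ∀ p Γ Δ ts i l u, SubAt t p (.node Γ Δ ts) → NSeqs.get ts i = some (l, u) →
    (l.d = Side.c → l.α ≤ M.F.R (E p) (E (p ++ [i]))) ∧
    (l.d = Side.o → l.α < M.F.R (E p) (E (p ++ [i])))

/-- The nested-sequent `t` is false in `M` under `E`. -/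
def FalseUnder {Pm : MBParams} (M : MBRealization Pm) (t : NSeq Pm)
    (E : List ℕ → M.F.S) : Prop :=
  ∀ p Γ Δ ts, SubAt t p (.node Γ Δ ts) →
    (∀ A ∈ Γ, E p ∈ M.val A) ∧ (∀ A ∈ Δ, E p ∉ M.val A)

/-- Validity of a nested-sequent: it is not false under any embedding into
any MB-realization. -/
def NSValid {Pm : MBParams} (t : NSeq Pm) : Prop :=
  ∀ (M : MBRealization Pm) (E : List ℕ → M.F.S), IsEmb M t E → ¬ FalseUnder M t E


/-- `□^d_α A`. -/
def mkBox {Pm : MBParams} (d : Side) (α : Pm.J) (A : MBForm Pm) : MBForm Pm :=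
  match d with
  | .c => .boxc α A
  | .o => .boxo α A

/-- The total order `⪯` on `I × {c,o}`: `pleq α d β d'` means `(α,d) ⪯ (β,d')`. -/
def pleq : ℝ → Side → ℝ → Side → Prop
  | α, .o, β, .c => α < β
  | α, _, β, _ => α ≤ β

/-- Provability in the nested-sequent calculus **NSMB**.  The boolean
parameter records whether the rule (cut) may be used. -/
inductive Provable {Pm : MBParams} : Bool → NSeq Pm → Prop
  /-- axiom `‖A, Γ ⇒ Δ, A, T‖` -/
  | axId {cut : Bool} {t : NSeq Pm} {p Γ Δ ts A} :
      SubAt t p (.node Γ Δ ts) → A ∈ Γ → A ∈ Δ → Provable cut t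
  /-- axiom `‖Γ ⇒ Δ, ⊤, T‖` -/
  | axTop {cut : Bool} {t : NSeq Pm} {p Γ Δ ts} :
      SubAt t p (.node Γ Δ ts) → MBForm.top ∈ Δ → Provable cut t
  /-- axiom `‖⊥, Γ ⇒ Δ, T‖` -/
  | axBot {cut : Bool} {t : NSeq Pm} {p Γ Δ ts} :
      SubAt t p (.node Γ Δ ts) → MBForm.bot ∈ Γ → Provable cut t
  /-- axiom `‖Γ ⇒ Δ, □^o_1 A, T‖` -/
  | axBoxO1 {cut : Bool} {t : NSeq Pm} {p Γ Δ ts A} :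
      SubAt t p (.node Γ Δ ts) → MBForm.boxo ⟨1, Pm.one_mem⟩ A ∈ Δ → Provable cut t
  /-- rule (cut) -/
  | cutR {t : NSeq Pm} {p Γ Δ ts A} :
      SubAt t p (.node Γ Δ ts) →
      Provable true (t.setSeq p Γ (insert A Δ)) →
      Provable true (t.setSeq p (insert A Γ) Δ) →
      Provable true t
  /-- rule (wL) -/
  | wL {cut : Bool} {t : NSeq Pm} {p Γ Δ ts A} :
      SubAt t p (.node Γ Δ ts) → Provable cut t →
      Provable cut (t.setSeq p (insert A Γ) Δ)
  /-- rule (wR) -/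
  | wR {cut : Bool} {t : NSeq Pm} {p Γ Δ ts A} :
      SubAt t p (.node Γ Δ ts) → Provable cut t →
      Provable cut (t.setSeq p Γ (insert A Δ))
  /-- rule (¬L) -/
  | negL {cut : Bool} {t : NSeq Pm} {p Γ Δ ts A} :
      SubAt t p (.node Γ Δ ts) →
      Provable cut (t.setSeq p Γ (insert A Δ)) →
      Provable cut (t.setSeq p (insert (MBForm.neg A) Γ) Δ)
  /-- rule (¬R) -/
  | negR {cut : Bool} {t : NSeq Pm} {p Γ Δ ts A} :
      SubAt t p (.node Γ Δ ts) →
      Provable cut (t.setSeq p (insert A Γ) Δ) →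
      Provable cut (t.setSeq p Γ (insert (MBForm.neg A) Δ))
  /-- rule (∧L) -/
  | andL {cut : Bool} {t : NSeq Pm} {p Γ Δ ts A B} :
      SubAt t p (.node Γ Δ ts) →
      Provable cut (t.setSeq p (insert A (insert B Γ)) Δ) →
      Provable cut (t.setSeq p (insert (MBForm.conj A B) Γ) Δ)
  /-- rule (∧R) -/
  | andR {cut : Bool} {t : NSeq Pm} {p Γ Δ ts A B} :
      SubAt t p (.node Γ Δ ts) →
      Provable cut (t.setSeq p Γ (insert A Δ)) →
      Provable cut (t.setSeq p Γ (insert B Δ)) →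
      Provable cut (t.setSeq p Γ (insert (MBForm.conj A B) Δ))
  /-- rule (□L), with side condition `(α,d) ⪯ (β,d')` -/
  | boxL {cut : Bool} {t : NSeq Pm} {p Γ Δ ts i l u Γ' Δ' ts' A} {α : Pm.J} {d : Side} :
      SubAt t p (.node Γ Δ ts) → NSeqs.get ts i = some (l, u) →
      SubAt t (p ++ [i]) (.node Γ' Δ' ts') →
      pleq (α : ℝ) d l.α l.d →
      Provable cut (t.setSeq (p ++ [i]) (insert A Γ') Δ') →
      Provable cut (t.setSeq p (insert (mkBox d α A) Γ) Δ)
  /-- rule (□L sym), with side condition `(α,d) ⪯ (β,d')` -/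
  | boxLsym {cut : Bool} {t : NSeq Pm} {p Γ Δ ts i l u Γ' Δ' ts' A} {α : Pm.J} {d : Side} :
      SubAt t p (.node Γ Δ ts) → NSeqs.get ts i = some (l, u) →
      SubAt t (p ++ [i]) (.node Γ' Δ' ts') →
      pleq (α : ℝ) d l.α l.d →
      Provable cut (t.setSeq p (insert A Γ) Δ) →
      Provable cut (t.setSeq (p ++ [i]) (insert (mkBox d α A) Γ') Δ')
  /-- rule (□L self), with side condition `(α,d) ≠ (1,o)` -/
  | boxLself {cut : Bool} {t : NSeq Pm} {p Γ Δ ts A} {α : Pm.J} {d : Side} :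
      SubAt t p (.node Γ Δ ts) → ¬((α : ℝ) = 1 ∧ d = Side.o) →
      Provable cut (t.setSeq p (insert A Γ) Δ) →
      Provable cut (t.setSeq p (insert (mkBox d α A) Γ) Δ)
  /-- rule (□^c_0): erase `A` from the left of one node and add `□^c_0 A`
  to the left of another arbitrary node -/
  | boxC0 {cut : Bool} {t : NSeq Pm} {p Γ Δ ts q Γ'' Δ'' ts'' A} :
      SubAt t p (.node Γ Δ ts) → SubAt t q (.node Γ'' Δ'' ts'') →
      Provable cut (t.setSeq p (insert A Γ) Δ) →
      Provable cut (t.setSeq q (insert (MBForm.boxc ⟨0, Pm.zero_mem⟩ A) Γ'') Δ'')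
  /-- rule (□R) -/
  | boxR {cut : Bool} {t : NSeq Pm} {p Γ Δ ts A} {l : MBLab Pm} :
      SubAt t p (.node Γ Δ ts) →
      Provable cut (t.addChild p l (.node ∅ {A} .nil)) →
      Provable cut (t.setSeq p Γ (insert (l.box A) Δ))
  /-- rule (□R self) -/
  | boxRself {cut : Bool} {t : NSeq Pm} {p Γ Δ ts A} :
      SubAt t p (.node Γ Δ ts) →
      Provable cut (t.setSeq p Γ (insert A Δ)) →
      Provable cut (t.setSeq p Γ (insert (MBForm.boxc ⟨1, Pm.one_mem⟩ A) Δ))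


/-- The subformula relation. -/
inductive Subf {Pm : MBParams} : MBForm Pm → MBForm Pm → Prop
  | refl (A : MBForm Pm) : Subf A A
  | negS {A B : MBForm Pm} : Subf A B → Subf A (.neg B)
  | conjL {A B C : MBForm Pm} : Subf A B → Subf A (.conj B C)
  | conjR {A B C : MBForm Pm} : Subf A C → Subf A (.conj B C)
  | boxcS {A B : MBForm Pm} {α : Pm.J} : Subf A B → Subf A (.boxc α B)
  | boxoS {A B : MBForm Pm} {α : Pm.J} : Subf A B → Subf A (.boxo α B)

/-- `A` occurs in (some sequent of) the nested-sequent `t`. -/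
def OccursIn {Pm : MBParams} (A : MBForm Pm) (t : NSeq Pm) : Prop :=
  ∃ p Γ Δ ts, SubAt t p (.node Γ Δ ts) ∧ (A ∈ Γ ∨ A ∈ Δ)

/-- One step of the saturation procedure used to build `Γ_C ⇒ Δ_C, T_C`.
The state is a nested-sequent together with the set of (address, formula)
occurrences of right-hand boxed formulas that have already been processed by
step (8). -/
inductive SatStep {Pm : MBParams} :
    NSeq Pm × Set (List ℕ × MBForm Pm) → NSeq Pm × Set (List ℕ × MBForm Pm) → Prop
  /-- step (1): `A ∧ B` on the left -/
  | andL {t D p Γ Δ ts A B} :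
      SubAt t p (.node Γ Δ ts) → MBForm.conj A B ∈ Γ →
      SatStep (t, D) (t.setSeq p (insert A (insert B Γ)) Δ, D)
  /-- step (2): `A ∧ B` on the right; the disjunct keeping unprovability is adopted -/
  | andR {t D p Γ Δ ts A B C} :
      SubAt t p (.node Γ Δ ts) → MBForm.conj A B ∈ Δ → (C = A ∨ C = B) →
      ¬ Provable true (t.setSeq p Γ (insert C Δ)) →
      SatStep (t, D) (t.setSeq p Γ (insert C Δ), D)
  /-- step (3): `¬A` on the left -/
  | negL {t D p Γ Δ ts A} :
      SubAt t p (.node Γ Δ ts) → MBForm.neg A ∈ Γ →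
      SatStep (t, D) (t.setSeq p Γ (insert A Δ), D)
  /-- step (4): `¬A` on the right -/
  | negR {t D p Γ Δ ts A} :
      SubAt t p (.node Γ Δ ts) → MBForm.neg A ∈ Δ →
      SatStep (t, D) (t.setSeq p (insert A Γ) Δ, D)
  /-- step (5): `□^d_α A` on the left of the parent of a bracket with `(α,d) ⪯ (β,d')` -/
  | boxL {t D p Γ Δ ts i l u Γ' Δ' ts' A} {α : Pm.J} {d : Side} :
      SubAt t p (.node Γ Δ ts) → NSeqs.get ts i = some (l, u) →
      SubAt t (p ++ [i]) (.node Γ' Δ' ts') →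
      pleq (α : ℝ) d l.α l.d → mkBox d α A ∈ Γ →
      SatStep (t, D) (t.setSeq (p ++ [i]) (insert A Γ') Δ', D)
  /-- step (6): `□^d_α A` on the left of the child of a bracket with `(α,d) ⪯ (β,d')` -/
  | boxLsym {t D p Γ Δ ts i l u Γ' Δ' ts' A} {α : Pm.J} {d : Side} :
      SubAt t p (.node Γ Δ ts) → NSeqs.get ts i = some (l, u) →
      SubAt t (p ++ [i]) (.node Γ' Δ' ts') →
      pleq (α : ℝ) d l.α l.d → mkBox d α A ∈ Γ' →
      SatStep (t, D) (t.setSeq p (insert A Γ) Δ, D)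
  /-- step (7): `□^d_α A` on the left, `(α,d) ≠ (1,o)` -/
  | boxLself {t D p Γ Δ ts A} {α : Pm.J} {d : Side} :
      SubAt t p (.node Γ Δ ts) → ¬((α : ℝ) = 1 ∧ d = Side.o) → mkBox d α A ∈ Γ →
      SatStep (t, D) (t.setSeq p (insert A Γ) Δ, D)
  /-- step (8): `□^d_α A` on the right (`α ≠ 1`), performed once per occurrence -/
  | boxR {t D p Γ Δ ts A} {α : Pm.J} {d : Side} (hne : (α : ℝ) ≠ 1) :
      SubAt t p (.node Γ Δ ts) → mkBox d α A ∈ Δ → (p, mkBox d α A) ∉ D →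
      SatStep (t, D)
        (t.addChild p ⟨(α : ℝ), α.2, hne, d⟩ (.node ∅ {A} .nil),
         insert (p, mkBox d α A) D)
  /-- step (9): `□^c_1 A` on the right -/
  | boxRself {t D p Γ Δ ts A} :
      SubAt t p (.node Γ Δ ts) → MBForm.boxc ⟨1, Pm.one_mem⟩ A ∈ Δ →
      SatStep (t, D) (t.setSeq p Γ (insert A Δ), D)
  /-- step (10): `□^c_0 A` on the left of some node: add `A` to the left of any node -/
  | boxC0 {t D p Γ Δ ts q Γ'' Δ'' ts'' A} :
      SubAt t p (.node Γ Δ ts) → MBForm.boxc ⟨0, Pm.zero_mem⟩ A ∈ Γ →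
      SubAt t q (.node Γ'' Δ'' ts'') →
      SatStep (t, D) (t.setSeq q (insert A Γ'') Δ'', D)

/-- A state of the saturation procedure is saturated (terminal) when no
saturation step changes it any more. -/
def Saturated {Pm : MBParams} (s : NSeq Pm × Set (List ℕ × MBForm Pm)) : Prop :=
  ∀ s', SatStep s s' → s' = s


mutual
/-- The subtree of `t` at address `p`, as a function. -/
def NSeq.sub? {Pm : MBParams} : NSeq Pm → List ℕ → Option (NSeq Pm)
  | t, [] => some t
  | .node _ _ ts, i :: p => NSeqs.subs? ts i p
def NSeqs.subs? {Pm : MBParams} : NSeqs Pm → ℕ → List ℕ → Option (NSeq Pm)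
  | .nil, _, _ => none
  | .cons _ t _, 0, p => t.sub? p
  | .cons _ _ ts, n+1, p => NSeqs.subs? ts n p
end

/-- The label of the edge from the node at address `p` to its `i`-th child. -/
def labelAt {Pm : MBParams} (t : NSeq Pm) (p : List ℕ) (i : ℕ) : Option (MBLab Pm) :=
  match t.sub? p with
  | some (.node _ _ ts) => (NSeqs.get ts i).map Prod.fst
  | none => none

/-- The set of elements of `J` appearing in a formula. -/
def MBForm.jsetF {Pm : MBParams} : MBForm Pm → Set ℝ
  | .var _ => ∅
  | .top => ∅
  | .bot => ∅
  | .neg A => A.jsetF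
  | .conj A B => A.jsetF ∪ B.jsetF
  | .boxc α A => insert (α : ℝ) A.jsetF
  | .boxo α A => insert (α : ℝ) A.jsetF

mutual
/-- The numbers appearing in a nested-sequent (in formulas or brackets). -/
def NSeq.jsetT {Pm : MBParams} : NSeq Pm → Set ℝ
  | .node Γ Δ ts =>
      (⋃ A ∈ Γ, MBForm.jsetF A) ∪ (⋃ A ∈ Δ, MBForm.jsetF A) ∪ NSeqs.jsetTs ts
def NSeqs.jsetTs {Pm : MBParams} : NSeqs Pm → Set ℝ
  | .nil => ∅
  | .cons l t ts => insert l.α (t.jsetT ∪ NSeqs.jsetTs ts)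
end

/-- `(Γ ⇒ Δ, T)_J`: the numbers appearing in the nested-sequent, with `0` and `1`. -/
def jset {Pm : MBParams} (t : NSeq Pm) : Set ℝ :=
  insert (0:ℝ) (insert (1:ℝ) t.jsetT)

/-- `U` is an interpolated set of `Js`. -/
def Interpolated (Js U : Set ℝ) : Prop :=
  U.Finite ∧ U ⊆ Set.Icc (0:ℝ) 1 ∧ Js ⊆ U ∧
    ∀ α ∈ Js, ∀ β ∈ Js, α < β → (∀ γ ∈ Js, ¬ (α < γ ∧ γ < β)) →
      ∃! δ, δ ∈ U ∧ α < δ ∧ δ < β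

/-- `Suc U α`: the successor of `α` in the interpolated set `U` (with `Suc 1 = 1`). -/
noncomputable def Suc (U : Set ℝ) (α : ℝ) : ℝ := sInf ((U ∩ Set.Ioi α) ∪ {1})

/-- Auxiliary value of the canonical relation in case `q` is the child of `p`
via a bracket (`β` for `[·]^c_β`, `Suc β` for `[·]^o_β`), and `0` otherwise. -/
noncomputable def lval {Pm : MBParams} (t : NSeq Pm) (U : Set ℝ) (p q : List ℕ) : ℝ :=
  match q.getLast? with
  | none => 0
  | some i =>
      if q.dropLast = p then
        match labelAt t p i with
        | some l => (match l.d with | Side.c => l.α | Side.o => Suc U l.α)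
        | none => 0
      else 0

/-- The canonical relation `R_C` (on node addresses). -/
noncomputable def RC {Pm : MBParams} (t : NSeq Pm) (U : Set ℝ) (p q : List ℕ) : ℝ :=
  if p = q then 1 else max (lval t U p q) (lval t U q p)

/-- The worlds of the canonical model: the nodes of the saturated nested-sequent. -/
def World {Pm : MBParams} (t : NSeq Pm) : Type := {p : List ℕ // IsNode t p}

/-- The canonical relation `R_C`, as a function on the worlds. -/
noncomputable def RCW {Pm : MBParams} (t : NSeq Pm) (U : Set ℝ) (p q : World t) : ℝ :=
  RC t U p.val q.val

/-- The canonical valuation `V_C` of the propositional variables. -/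
def VC {Pm : MBParams} (t : NSeq Pm) (n : ℕ) : Set (World t) :=
  {p | ∃ Γ Δ ts, SubAt t p.val (.node Γ Δ ts) ∧ MBForm.var n ∈ Γ}

/-- `P_C`: the family of all definable sets of worlds of the canonical model. -/
def PC {Pm : MBParams} (t : NSeq Pm) (U : Set ℝ) : Set (Set (World t)) :=
  {X | ∃ A : MBForm Pm, X = MBForm.valR (RCW t U) (VC t) A}


/-! ### Auxiliary development for the completeness proof -/

section Aux
variable {Pm : MBParams}

/- Countability of formulas -/

instance : Countable ↥Pm.J := Set.countable_coe_iff.mpr Pm.finite.countable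

noncomputable def jenc (Pm : MBParams) : ↥Pm.J → ℕ :=
  (Countable.exists_injective_nat ↥Pm.J).choose

theorem jenc_inj : Function.Injective (jenc Pm) :=
  (Countable.exists_injective_nat ↥Pm.J).choose_spec

noncomputable def encF : MBForm Pm → ℕ
  | .var n => Nat.pair 0 n
  | .top => Nat.pair 1 0
  | .bot => Nat.pair 2 0
  | .neg A => Nat.pair 3 (encF A)
  | .conj A B => Nat.pair 4 (Nat.pair (encF A) (encF B))
  | .boxc a A => Nat.pair 5 (Nat.pair (jenc Pm a) (encF A))
  | .boxo a A => Nat.pair 6 (Nat.pair (jenc Pm a) (encF A))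

theorem encF_inj : ∀ A B : MBForm Pm, encF A = encF B → A = B := by
  intro A
  induction A with
  | var n => intro B h; cases B <;> simp [encF, Nat.pair_eq_pair] at h <;> simp [h]
  | top => intro B h; cases B <;> simp [encF, Nat.pair_eq_pair] at h <;> simp [h]
  | bot => intro B h; cases B <;> simp [encF, Nat.pair_eq_pair] at h <;> simp [h]
  | neg A ih =>
      intro B h; cases B <;> simp [encF, Nat.pair_eq_pair] at h
      simp [ih _ h]
  | conj A B ihA ihB =>
      intro C h; cases C <;> simp [encF, Nat.pair_eq_pair] at h
      simp [ihA _ h.1, ihB _ h.2]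
  | boxc a A ih =>
      intro B h; cases B <;> simp [encF, Nat.pair_eq_pair] at h
      simp [ih _ h.2, jenc_inj h.1]
  | boxo a A ih =>
      intro B h; cases B <;> simp [encF, Nat.pair_eq_pair] at h
      simp [ih _ h.2, jenc_inj h.1]

instance : Countable (MBForm Pm) := ⟨⟨encF, fun _ _ h => encF_inj _ _ h⟩⟩

/- Basic structural lemmas -/

theorem exists_node (t : NSeq Pm) : ∃ Γ Δ ts, t = .node Γ Δ ts := by
  cases t; exact ⟨_, _, _, rfl⟩

def NSeqs.len : NSeqs Pm → ℕ
  | .nil => 0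
  | .cons _ _ ts => ts.len + 1

theorem get_snoc_of_get : ∀ (ts : NSeqs Pm) (i : ℕ) {l u}, ts.get i = some (l, u) →
    ∀ l' u', (ts.snoc l' u').get i = some (l, u)
  | .nil, i, l, u, h => by simp [NSeqs.get] at h
  | .cons a b ts, 0, l, u, h => by
      intro l' u'; simpa [NSeqs.get, NSeqs.snoc] using h
  | .cons a b ts, (i+1), l, u, h => by
      intro l' u'
      simp only [NSeqs.get, NSeqs.snoc] at h ⊢
      exact get_snoc_of_get ts i h _ _

theorem get_snoc_len : ∀ (ts : NSeqs Pm) (l : MBLab Pm) (u : NSeq Pm),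
    (ts.snoc l u).get ts.len = some (l, u)
  | .nil, l, u => rfl
  | .cons a b ts, l, u => by
      simp only [NSeqs.snoc, NSeqs.len, NSeqs.get]
      exact get_snoc_len ts l u

theorem subs?_eq : ∀ (ts : NSeqs Pm) (i : ℕ) (p : List ℕ),
    NSeqs.subs? ts i p = (ts.get i).bind (fun x => x.2.sub? p)
  | .nil, i, p => by simp [NSeqs.subs?, NSeqs.get]
  | .cons l t ts, 0, p => by simp [NSeqs.subs?, NSeqs.get]
  | .cons l t ts, (i+1), p => by
      simp only [NSeqs.subs?, NSeqs.get]
      exact subs?_eq ts i p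

theorem sub?_of_subAt {t u : NSeq Pm} {p : List ℕ} (h : SubAt t p u) : t.sub? p = some u := by
  induction h with
  | here t => cases t; rfl
  | there hget hsub ih =>
      show NSeqs.subs? _ _ _ = _
      rw [subs?_eq, hget]
      exact ih

theorem subAt_of_sub? : ∀ (p : List ℕ) (t u : NSeq Pm), t.sub? p = some u → SubAt t p u
  | [], t, u, h => by
      cases t
      simp only [NSeq.sub?, Option.some.injEq] at h
      exact h ▸ SubAt.here _
  | (i :: p), .node Γ Δ ts, u, h => by
      simp only [NSeq.sub?] at h
      rw [subs?_eq] at h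
      cases hg : ts.get i with
      | none => rw [hg] at h; simp at h
      | some x =>
          rw [hg] at h
          simp only [Option.bind_some] at h
          exact SubAt.there (show NSeqs.get ts i = some (x.1, x.2) by rw [hg])
            (subAt_of_sub? p x.2 u h)

theorem subAt_iff_sub? {t u : NSeq Pm} {p : List ℕ} : SubAt t p u ↔ t.sub? p = some u :=
  ⟨sub?_of_subAt, subAt_of_sub? p t u⟩

theorem sub?_append : ∀ (p q : List ℕ) (t : NSeq Pm),
    t.sub? (p ++ q) = (t.sub? p).bind (fun u => u.sub? q)
  | [], q, t => by cases t; rfl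
  | (i :: p), q, .node Γ Δ ts => by
      simp only [List.cons_append, NSeq.sub?]
      rw [subs?_eq, subs?_eq]
      cases ts.get i with
      | none => simp
      | some x => simp only [Option.bind_some]; exact sub?_append p q x.2

/-- Labels-and-children preservation. -/
def KidsLe (ts ts' : NSeqs Pm) : Prop :=
  ∀ i l u, ts.get i = some (l, u) → ∃ u', ts'.get i = some (l, u')

theorem KidsLe.refl (ts : NSeqs Pm) : KidsLe ts ts := fun i l u h => ⟨u, h⟩

theorem KidsLe.trans {ts₁ ts₂ ts₃ : NSeqs Pm} (h₁ : KidsLe ts₁ ts₂) (h₂ : KidsLe ts₂ ts₃) :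
    KidsLe ts₁ ts₃ := by
  intro i l u h
  obtain ⟨u', hu'⟩ := h₁ i l u h
  exact h₂ i l u' hu'

theorem get_setSeqs_same : ∀ (ts : NSeqs Pm) (i : ℕ) (p : List ℕ) Γ' Δ' {l : MBLab Pm}
    {u : NSeq Pm}, ts.get i = some (l, u) →
    (NSeqs.setSeqs ts i p Γ' Δ').get i = some (l, u.setSeq p Γ' Δ')
  | .nil, i, p, Γ', Δ', l, u, h => by simp [NSeqs.get] at h
  | .cons a b ts, 0, p, Γ', Δ', l, u, h => by
      simp only [NSeqs.get, Option.some.injEq, Prod.mk.injEq] at h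
      simp [NSeqs.setSeqs, NSeqs.get, h.1, h.2]
  | .cons a b ts, (i+1), p, Γ', Δ', l, u, h => by
      simp only [NSeqs.get] at h
      simp only [NSeqs.setSeqs, NSeqs.get]
      exact get_setSeqs_same ts i p Γ' Δ' h

theorem get_setSeqs_ne : ∀ (ts : NSeqs Pm) (i : ℕ) (p : List ℕ) Γ' Δ' (j : ℕ), j ≠ i →
    (NSeqs.setSeqs ts i p Γ' Δ').get j = ts.get j
  | .nil, i, p, Γ', Δ', j, h => by simp [NSeqs.setSeqs]
  | .cons a b ts, 0, p, Γ', Δ', 0, h => absurd rfl h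
  | .cons a b ts, 0, p, Γ', Δ', (j+1), h => by simp [NSeqs.setSeqs, NSeqs.get]
  | .cons a b ts, (i+1), p, Γ', Δ', 0, h => by simp [NSeqs.setSeqs, NSeqs.get]
  | .cons a b ts, (i+1), p, Γ', Δ', (j+1), h => by
      simp only [NSeqs.setSeqs, NSeqs.get]
      exact get_setSeqs_ne ts i p Γ' Δ' j (fun hh => h (by omega))

theorem kidsLe_setSeqs (ts : NSeqs Pm) (i : ℕ) (p : List ℕ) (Γ' Δ') :
    KidsLe ts (NSeqs.setSeqs ts i p Γ' Δ') := by
  intro j l u h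
  by_cases hj : j = i
  · subst hj; exact ⟨u.setSeq p Γ' Δ', get_setSeqs_same ts j p Γ' Δ' h⟩
  · exact ⟨u, by rw [get_setSeqs_ne ts i p Γ' Δ' j hj]; exact h⟩

theorem sub?_setSeq : ∀ (p : List ℕ) (t : NSeq Pm) {Γ Δ ts},
    t.sub? p = some (.node Γ Δ ts) → ∀ (Γ' Δ' : Finset (MBForm Pm)) (q : List ℕ) {Γ₀ Δ₀ ts₀},
    t.sub? q = some (.node Γ₀ Δ₀ ts₀) →
    ∃ ts₁, (t.setSeq p Γ' Δ').sub? q =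
      some (.node (if q = p then Γ' else Γ₀) (if q = p then Δ' else Δ₀) ts₁) ∧ KidsLe ts₀ ts₁
      ∧ (q = p → ts₁ = ts₀)
  | [], .node Γt Δt tst, Γ, Δ, ts, hp, Γ', Δ', [], Γ₀, Δ₀, ts₀, hq => by
      simp only [NSeq.sub?, Option.some.injEq] at hq
      obtain ⟨h1, h2, h3⟩ := NSeq.node.inj hq
      exact ⟨ts₀, by simp [NSeq.setSeq, NSeq.sub?, h3], KidsLe.refl _, fun _ => rfl⟩
  | [], .node Γt Δt tst, Γ, Δ, ts, hp, Γ', Δ', (j :: q'), Γ₀, Δ₀, ts₀, hq => by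
      refine ⟨ts₀, ?_, KidsLe.refl _, fun h => absurd h (List.cons_ne_nil j q')⟩
      simp only [NSeq.setSeq, NSeq.sub?, if_neg (List.cons_ne_nil j q')]
      simpa only [NSeq.sub?] using hq
  | (i :: p'), .node Γt Δt tst, Γ, Δ, ts, hp, Γ', Δ', [], Γ₀, Δ₀, ts₀, hq => by
      simp only [NSeq.sub?, Option.some.injEq] at hq
      obtain ⟨h1, h2, h3⟩ := NSeq.node.inj hq
      refine ⟨NSeqs.setSeqs tst i p' Γ' Δ', ?_, h3 ▸ kidsLe_setSeqs _ _ _ _ _,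
        fun h => absurd h.symm (List.cons_ne_nil i p')⟩
      have : ([] : List ℕ) ≠ i :: p' := (List.cons_ne_nil i p').symm
      simp [NSeq.setSeq, NSeq.sub?, this, h1, h2]
  | (i :: p'), .node Γt Δt tst, Γ, Δ, ts, hp, Γ', Δ', (j :: q'), Γ₀, Δ₀, ts₀, hq => by
      simp only [NSeq.sub?] at hp hq
      rw [subs?_eq] at hp hq
      cases hgi : tst.get i with
      | none => rw [hgi] at hp; simp at hp
      | some xi =>
          rw [hgi] at hp
          simp only [Option.bind_some] at hp
          by_cases hj : j = i
          · subst hj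
            rw [hgi] at hq
            simp only [Option.bind_some] at hq
            obtain ⟨ts₁, h1, h2, h3⟩ := sub?_setSeq p' xi.2 hp Γ' Δ' q' hq
            refine ⟨ts₁, ?_, h2, fun h => h3 (List.cons.inj h).2⟩
            simp only [NSeq.setSeq, NSeq.sub?]
            rw [subs?_eq, get_setSeqs_same tst j p' Γ' Δ' (by rw [hgi]), Option.bind_some,
              h1]
            simp only [List.cons.injEq, true_and]
          · refine ⟨ts₀, ?_, KidsLe.refl _, fun h => absurd (List.cons.inj h).1 hj⟩
            simp only [NSeq.setSeq, NSeq.sub?]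
            rw [subs?_eq, get_setSeqs_ne tst i p' Γ' Δ' j hj, hq]
            have : ¬ (j :: q' = i :: p') := fun h => hj (List.cons.inj h).1
            simp [this]

theorem setSeqs_congr : ∀ (ts : NSeqs Pm) (i : ℕ) {l : MBLab Pm} {v : NSeq Pm},
    ts.get i = some (l, v) → ∀ (p : List ℕ) Γ Δ, v.setSeq p Γ Δ = v →
    NSeqs.setSeqs ts i p Γ Δ = ts
  | .nil, i, l, v, h, p, Γ, Δ, hv => by simp [NSeqs.get] at h
  | .cons a b ts, 0, l, v, h, p, Γ, Δ, hv => by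
      simp only [NSeqs.get, Option.some.injEq, Prod.mk.injEq] at h
      simp [NSeqs.setSeqs, h.2, hv]
  | .cons a b ts, (i+1), l, v, h, p, Γ, Δ, hv => by
      simp only [NSeqs.get] at h
      simp only [NSeqs.setSeqs, NSeqs.cons.injEq, true_and]
      exact setSeqs_congr ts i h p Γ Δ hv

theorem setSeq_self : ∀ (p : List ℕ) (t : NSeq Pm) {Γ Δ ts},
    t.sub? p = some (.node Γ Δ ts) → t.setSeq p Γ Δ = t
  | [], .node Γt Δt tst, Γ, Δ, ts, h => by
      simp only [NSeq.sub?, Option.some.injEq] at h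
      obtain ⟨h1, h2, h3⟩ := NSeq.node.inj h
      subst h1; subst h2; subst h3
      rfl
  | (i :: p'), .node Γt Δt tst, Γ, Δ, ts, h => by
      simp only [NSeq.sub?] at h
      rw [subs?_eq] at h
      cases hgi : tst.get i with
      | none => rw [hgi] at h; simp at h
      | some xi =>
          rw [hgi] at h
          simp only [Option.bind_some] at h
          simp only [NSeq.setSeq, NSeq.node.injEq, true_and]
          exact setSeqs_congr tst i (by rw [hgi]) p' Γ Δ (setSeq_self p' xi.2 h)

theorem get_addChilds_same : ∀ (ts : NSeqs Pm) (i : ℕ) (p : List ℕ) (l : MBLab Pm)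
    (u : NSeq Pm) {l₀ : MBLab Pm} {v : NSeq Pm}, ts.get i = some (l₀, v) →
    (NSeqs.addChilds ts i p l u).get i = some (l₀, v.addChild p l u)
  | .nil, i, p, l, u, l₀, v, h => by simp [NSeqs.get] at h
  | .cons a b ts, 0, p, l, u, l₀, v, h => by
      simp only [NSeqs.get, Option.some.injEq, Prod.mk.injEq] at h
      simp [NSeqs.addChilds, NSeqs.get, h.1, h.2]
  | .cons a b ts, (i+1), p, l, u, l₀, v, h => by
      simp only [NSeqs.get] at h
      simp only [NSeqs.addChilds, NSeqs.get]
      exact get_addChilds_same ts i p l u h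

theorem get_addChilds_ne : ∀ (ts : NSeqs Pm) (i : ℕ) (p : List ℕ) (l : MBLab Pm)
    (u : NSeq Pm) (j : ℕ), j ≠ i → (NSeqs.addChilds ts i p l u).get j = ts.get j
  | .nil, i, p, l, u, j, h => by simp [NSeqs.addChilds]
  | .cons a b ts, 0, p, l, u, 0, h => absurd rfl h
  | .cons a b ts, 0, p, l, u, (j+1), h => by simp [NSeqs.addChilds, NSeqs.get]
  | .cons a b ts, (i+1), p, l, u, 0, h => by simp [NSeqs.addChilds, NSeqs.get]
  | .cons a b ts, (i+1), p, l, u, (j+1), h => by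
      simp only [NSeqs.addChilds, NSeqs.get]
      exact get_addChilds_ne ts i p l u j (fun hh => h (by omega))

theorem kidsLe_addChilds (ts : NSeqs Pm) (i : ℕ) (p : List ℕ) (l : MBLab Pm) (u : NSeq Pm) :
    KidsLe ts (NSeqs.addChilds ts i p l u) := by
  intro j l₀ v h
  by_cases hj : j = i
  · subst hj; exact ⟨v.addChild p l u, get_addChilds_same ts j p l u h⟩
  · exact ⟨v, by rw [get_addChilds_ne ts i p l u j hj]; exact h⟩

theorem kidsLe_snoc (ts : NSeqs Pm) (l : MBLab Pm) (u : NSeq Pm) : KidsLe ts (ts.snoc l u) :=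
  fun i l₀ v h => ⟨v, get_snoc_of_get ts i h l u⟩

theorem sub?_addChild : ∀ (p : List ℕ) (t : NSeq Pm) {Γ Δ ts},
    t.sub? p = some (.node Γ Δ ts) → ∀ (l : MBLab Pm) (u : NSeq Pm) (q : List ℕ) {Γ₀ Δ₀ ts₀},
    t.sub? q = some (.node Γ₀ Δ₀ ts₀) →
    ∃ ts₁, (t.addChild p l u).sub? q = some (.node Γ₀ Δ₀ ts₁) ∧ KidsLe ts₀ ts₁ ∧
      (q = p → ts₁ = ts₀.snoc l u)
  | [], .node Γt Δt tst, Γ, Δ, ts, hp, l, u, [], Γ₀, Δ₀, ts₀, hq => by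
      simp only [NSeq.sub?, Option.some.injEq] at hq
      obtain ⟨h1, h2, h3⟩ := NSeq.node.inj hq
      refine ⟨tst.snoc l u, ?_, h3 ▸ kidsLe_snoc _ _ _, fun _ => by rw [h3]⟩
      simp [NSeq.addChild, NSeq.sub?, h1, h2]
  | [], .node Γt Δt tst, Γ, Δ, ts, hp, l, u, (j :: q'), Γ₀, Δ₀, ts₀, hq => by
      simp only [NSeq.sub?] at hq
      rw [subs?_eq] at hq
      cases hgj : tst.get j with
      | none => rw [hgj] at hq; simp at hq
      | some xj =>
          rw [hgj] at hq
          simp only [Option.bind_some] at hq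
          refine ⟨ts₀, ?_, KidsLe.refl _, fun h => absurd h (List.cons_ne_nil j q')⟩
          simp only [NSeq.addChild, NSeq.sub?]
          rw [subs?_eq, get_snoc_of_get tst j (by rw [hgj]) l u, Option.bind_some]
          exact hq
  | (i :: p'), .node Γt Δt tst, Γ, Δ, ts, hp, l, u, [], Γ₀, Δ₀, ts₀, hq => by
      simp only [NSeq.sub?, Option.some.injEq] at hq
      obtain ⟨h1, h2, h3⟩ := NSeq.node.inj hq
      refine ⟨NSeqs.addChilds tst i p' l u, ?_, h3 ▸ kidsLe_addChilds _ _ _ _ _,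
        fun h => absurd h.symm (List.cons_ne_nil i p')⟩
      simp [NSeq.addChild, NSeq.sub?, h1, h2]
  | (i :: p'), .node Γt Δt tst, Γ, Δ, ts, hp, l, u, (j :: q'), Γ₀, Δ₀, ts₀, hq => by
      simp only [NSeq.sub?] at hp hq
      rw [subs?_eq] at hp hq
      cases hgi : tst.get i with
      | none => rw [hgi] at hp; simp at hp
      | some xi =>
          rw [hgi] at hp
          simp only [Option.bind_some] at hp
          by_cases hj : j = i
          · subst hj
            rw [hgi] at hq
            simp only [Option.bind_some] at hq
            obtain ⟨ts₁, h1, h2, h3⟩ := sub?_addChild p' xi.2 hp l u q' hq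
            refine ⟨ts₁, ?_, h2, fun h => h3 (List.cons.inj h).2⟩
            simp only [NSeq.addChild, NSeq.sub?]
            rw [subs?_eq, get_addChilds_same tst j p' l u (by rw [hgi]), Option.bind_some]
            exact h1
          · refine ⟨ts₀, ?_, KidsLe.refl _, fun h => absurd (List.cons.inj h).1 hj⟩
            simp only [NSeq.addChild, NSeq.sub?]
            rw [subs?_eq, get_addChilds_ne tst i p' l u j hj, hq]

/-- Extension order on nested sequents. -/
def Ext (t t' : NSeq Pm) : Prop :=
  ∀ p Γ Δ ts, t.sub? p = some (.node Γ Δ ts) →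
    ∃ Γ' Δ' ts', t'.sub? p = some (.node Γ' Δ' ts') ∧ Γ ⊆ Γ' ∧ Δ ⊆ Δ' ∧ KidsLe ts ts'

theorem Ext.refl (t : NSeq Pm) : Ext t t :=
  fun _ Γ Δ ts h => ⟨Γ, Δ, ts, h, le_refl _, le_refl _, KidsLe.refl _⟩

theorem Ext.trans {t₁ t₂ t₃ : NSeq Pm} (h₁ : Ext t₁ t₂) (h₂ : Ext t₂ t₃) : Ext t₁ t₃ := by
  intro p Γ Δ ts h
  obtain ⟨Γ', Δ', ts', h', hΓ, hΔ, hk⟩ := h₁ p Γ Δ ts h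
  obtain ⟨Γ'', Δ'', ts'', h'', hΓ', hΔ', hk'⟩ := h₂ p Γ' Δ' ts' h'
  exact ⟨Γ'', Δ'', ts'', h'', hΓ.trans hΓ', hΔ.trans hΔ', hk.trans hk'⟩

theorem ext_setSeq {t : NSeq Pm} {p Γ Δ ts} (hp : t.sub? p = some (.node Γ Δ ts))
    {Γ' Δ'} (hΓ : Γ ⊆ Γ') (hΔ : Δ ⊆ Δ') : Ext t (t.setSeq p Γ' Δ') := by
  intro q Γ₀ Δ₀ ts₀ hq
  obtain ⟨ts₁, h1, h2, -⟩ := sub?_setSeq p t hp Γ' Δ' q hq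
  by_cases hqp : q = p
  · subst hqp
    rw [hq] at hp
    obtain ⟨e1, e2, e3⟩ := NSeq.node.inj (Option.some.inj hp)
    rw [if_pos rfl, if_pos rfl] at h1
    exact ⟨Γ', Δ', ts₁, h1, e1 ▸ hΓ, e2 ▸ hΔ, h2⟩
  · rw [if_neg hqp, if_neg hqp] at h1
    exact ⟨Γ₀, Δ₀, ts₁, h1, le_refl _, le_refl _, h2⟩

theorem ext_addChild {t : NSeq Pm} {p Γ Δ ts} (hp : t.sub? p = some (.node Γ Δ ts))
    (l : MBLab Pm) (u : NSeq Pm) : Ext t (t.addChild p l u) := by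
  intro q Γ₀ Δ₀ ts₀ hq
  obtain ⟨ts₁, h1, h2, _⟩ := sub?_addChild p t hp l u q hq
  exact ⟨Γ₀, Δ₀, ts₁, h1, le_refl _, le_refl _, h2⟩

/- Closure lemmas: membership patterns that force provability. -/

theorem provable_axId {t : NSeq Pm} {p Γ Δ ts A} (hp : t.sub? p = some (.node Γ Δ ts))
    (h1 : A ∈ Γ) (h2 : A ∈ Δ) : Provable true t :=
  Provable.axId (subAt_of_sub? _ _ _ hp) h1 h2

theorem sub?_setSeq_self {t : NSeq Pm} {p Γ Δ ts} (hp : t.sub? p = some (.node Γ Δ ts))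
    (Γ' Δ' : Finset (MBForm Pm)) :
    (t.setSeq p Γ' Δ').sub? p = some (.node Γ' Δ' ts) := by
  obtain ⟨ts₁, h1, _, h3⟩ := sub?_setSeq p t hp Γ' Δ' p hp
  rw [if_pos rfl, if_pos rfl] at h1
  rwa [h3 rfl] at h1

theorem provable_negL {t : NSeq Pm} {p Γ Δ ts A} (hp : t.sub? p = some (.node Γ Δ ts))
    (h1 : MBForm.neg A ∈ Γ) (h2 : A ∈ Γ) : Provable true t := by
  have hs := sub?_setSeq_self hp Γ (insert A Δ)
  have hprem := provable_axId hs h2 (Finset.mem_insert_self _ _)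
  have := Provable.negL (subAt_of_sub? _ _ _ hp) hprem
  rwa [Finset.insert_eq_self.mpr h1, setSeq_self p t hp] at this

theorem provable_negR {t : NSeq Pm} {p Γ Δ ts A} (hp : t.sub? p = some (.node Γ Δ ts))
    (h1 : MBForm.neg A ∈ Δ) (h2 : A ∈ Δ) : Provable true t := by
  have hs := sub?_setSeq_self hp (insert A Γ) Δ
  have hprem := provable_axId hs (Finset.mem_insert_self _ _) h2
  have := Provable.negR (subAt_of_sub? _ _ _ hp) hprem
  rwa [Finset.insert_eq_self.mpr h1, setSeq_self p t hp] at this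

theorem provable_andL {t : NSeq Pm} {p Γ Δ ts A B} (hp : t.sub? p = some (.node Γ Δ ts))
    (h1 : MBForm.conj A B ∈ Γ) (h2 : A ∈ Δ ∨ B ∈ Δ) : Provable true t := by
  have hs := sub?_setSeq_self hp (insert A (insert B Γ)) Δ
  have hprem : Provable true (t.setSeq p (insert A (insert B Γ)) Δ) := by
    rcases h2 with h2 | h2
    · exact provable_axId hs (Finset.mem_insert_self _ _) h2
    · exact provable_axId hs (Finset.mem_insert_of_mem (Finset.mem_insert_self _ _)) h2
  have := Provable.andL (subAt_of_sub? _ _ _ hp) hprem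
  rwa [Finset.insert_eq_self.mpr h1, setSeq_self p t hp] at this

theorem provable_andR {t : NSeq Pm} {p Γ Δ ts A B} (hp : t.sub? p = some (.node Γ Δ ts))
    (h1 : MBForm.conj A B ∈ Δ) (h2 : A ∈ Γ) (h3 : B ∈ Γ) : Provable true t := by
  have hs₁ := sub?_setSeq_self hp Γ (insert A Δ)
  have hs₂ := sub?_setSeq_self hp Γ (insert B Δ)
  have := Provable.andR (subAt_of_sub? _ _ _ hp)
    (provable_axId hs₁ h2 (Finset.mem_insert_self _ _))
    (provable_axId hs₂ h3 (Finset.mem_insert_self _ _))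
  rwa [Finset.insert_eq_self.mpr h1, setSeq_self p t hp] at this

theorem provable_boxLself {t : NSeq Pm} {p Γ Δ ts A} {α : Pm.J} {d : Side}
    (hp : t.sub? p = some (.node Γ Δ ts)) (hc : ¬((α : ℝ) = 1 ∧ d = Side.o))
    (h1 : mkBox d α A ∈ Γ) (h2 : A ∈ Δ) : Provable true t := by
  have hs := sub?_setSeq_self hp (insert A Γ) Δ
  have := Provable.boxLself (subAt_of_sub? _ _ _ hp) hc
    (provable_axId hs (Finset.mem_insert_self _ _) h2)
  rwa [Finset.insert_eq_self.mpr h1, setSeq_self p t hp] at this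

theorem provable_boxRself {t : NSeq Pm} {p Γ Δ ts A} (hp : t.sub? p = some (.node Γ Δ ts))
    (h1 : MBForm.boxc ⟨1, Pm.one_mem⟩ A ∈ Δ) (h2 : A ∈ Γ) : Provable true t := by
  have hs := sub?_setSeq_self hp Γ (insert A Δ)
  have := Provable.boxRself (subAt_of_sub? _ _ _ hp)
    (provable_axId hs h2 (Finset.mem_insert_self _ _))
  rwa [Finset.insert_eq_self.mpr h1, setSeq_self p t hp] at this

theorem provable_boxL {t : NSeq Pm} {p Γ Δ ts i l u Γ' Δ' ts' A} {α : Pm.J} {d : Side}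
    (hp : t.sub? p = some (.node Γ Δ ts)) (hg : NSeqs.get ts i = some (l, u))
    (hq : t.sub? (p ++ [i]) = some (.node Γ' Δ' ts')) (hpl : pleq (α : ℝ) d l.α l.d)
    (h1 : mkBox d α A ∈ Γ) (h2 : A ∈ Δ') : Provable true t := by
  have hs := sub?_setSeq_self hq (insert A Γ') Δ'
  have := Provable.boxL (subAt_of_sub? _ _ _ hp) hg (subAt_of_sub? _ _ _ hq) hpl
    (provable_axId hs (Finset.mem_insert_self _ _) h2)
  rwa [Finset.insert_eq_self.mpr h1, setSeq_self p t hp] at this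

theorem provable_boxLsym {t : NSeq Pm} {p Γ Δ ts i l u Γ' Δ' ts' A} {α : Pm.J} {d : Side}
    (hp : t.sub? p = some (.node Γ Δ ts)) (hg : NSeqs.get ts i = some (l, u))
    (hq : t.sub? (p ++ [i]) = some (.node Γ' Δ' ts')) (hpl : pleq (α : ℝ) d l.α l.d)
    (h1 : mkBox d α A ∈ Γ') (h2 : A ∈ Δ) : Provable true t := by
  have hs := sub?_setSeq_self hp (insert A Γ) Δ
  have := Provable.boxLsym (subAt_of_sub? _ _ _ hp) hg (subAt_of_sub? _ _ _ hq) hpl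
    (provable_axId hs (Finset.mem_insert_self _ _) h2)
  rwa [Finset.insert_eq_self.mpr h1, setSeq_self _ t hq] at this

theorem provable_boxC0 {t : NSeq Pm} {p Γ Δ ts q Γ'' Δ'' ts'' A}
    (hp : t.sub? p = some (.node Γ Δ ts)) (hq : t.sub? q = some (.node Γ'' Δ'' ts''))
    (h1 : MBForm.boxc ⟨0, Pm.zero_mem⟩ A ∈ Γ) (h2 : A ∈ Δ'') : Provable true t := by
  have hs := sub?_setSeq_self hq (insert A Γ'') Δ''
  have := Provable.boxC0 (subAt_of_sub? _ _ _ hq) (subAt_of_sub? _ _ _ hp)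
    (provable_axId hs (Finset.mem_insert_self _ _) h2)
  rwa [Finset.insert_eq_self.mpr h1, setSeq_self p t hp] at this

theorem provable_spawn {t : NSeq Pm} {p Γ Δ ts A} {a : Pm.J} {d : Side}
    (hp : t.sub? p = some (.node Γ Δ ts)) (hne : (a : ℝ) ≠ 1)
    (h1 : mkBox d a A ∈ Δ)
    (h : Provable true (t.addChild p ⟨(a : ℝ), a.2, hne, d⟩ (.node ∅ {A} .nil))) :
    Provable true t := by
  have hbe : (⟨(a : ℝ), a.2, hne, d⟩ : MBLab Pm).box A = mkBox d a A := by
    cases d <;> rfl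
  have := Provable.boxR (l := ⟨(a : ℝ), a.2, hne, d⟩) (subAt_of_sub? _ _ _ hp) h
  rw [hbe] at this
  rwa [Finset.insert_eq_self.mpr h1, setSeq_self p t hp] at this

/- The saturation step and the ladder -/

/-- A witness child for a right box. -/
def HasWit (ts : NSeqs Pm) (α : ℝ) (d : Side) (B : MBForm Pm) : Prop :=
  ∃ i l u, ts.get i = some (l, u) ∧ l.α = α ∧ l.d = d ∧
    ∃ Γu Δu tsu, u = NSeq.node Γu Δu tsu ∧ B ∈ Δu

open Classical in
/-- Decide a formula at a node, keeping unprovability (uses cut). -/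
noncomputable def decide1 (t : NSeq Pm) (p : List ℕ) (Γ Δ : Finset (MBForm Pm))
    (A : MBForm Pm) : NSeq Pm :=
  if A ∈ Γ ∨ A ∈ Δ then t
  else if ¬ Provable true (t.setSeq p (insert A Γ) Δ) then t.setSeq p (insert A Γ) Δ
  else t.setSeq p Γ (insert A Δ)

open Classical in
/-- One step of the limit saturation procedure. -/
noncomputable def Step (t : NSeq Pm) (p : List ℕ) (A : MBForm Pm) : NSeq Pm :=
  match t.sub? p with
  | none => t
  | some (.node Γ Δ ts) =>
    match A with
    | .boxc a B =>
        if hcond : (MBForm.boxc a B) ∈ Δ ∧ (a : ℝ) ≠ 1 ∧ ¬ HasWit ts (a : ℝ) Side.c B then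
          t.addChild p ⟨(a : ℝ), a.2, hcond.2.1, Side.c⟩ (.node ∅ {B} .nil)
        else decide1 t p Γ Δ (.boxc a B)
    | .boxo a B =>
        if hcond : (MBForm.boxo a B) ∈ Δ ∧ (a : ℝ) ≠ 1 ∧ ¬ HasWit ts (a : ℝ) Side.o B then
          t.addChild p ⟨(a : ℝ), a.2, hcond.2.1, Side.o⟩ (.node ∅ {B} .nil)
        else decide1 t p Γ Δ (.boxo a B)
    | A => decide1 t p Γ Δ A

theorem decide1_unprov {t : NSeq Pm} {p Γ Δ ts} (hp : t.sub? p = some (.node Γ Δ ts))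
    (hun : ¬ Provable true t) (A : MBForm Pm) : ¬ Provable true (decide1 t p Γ Δ A) := by
  unfold decide1
  split
  · exact hun
  · split
    · next hnp => exact hnp
    · next hnp =>
        intro hr
        exact hun (Provable.cutR (subAt_of_sub? _ _ _ hp) hr (not_not.mp hnp))

theorem decide1_ext {t : NSeq Pm} {p Γ Δ ts} (hp : t.sub? p = some (.node Γ Δ ts))
    (A : MBForm Pm) : Ext t (decide1 t p Γ Δ A) := by
  unfold decide1
  split
  · exact Ext.refl t
  · split
    · exact ext_setSeq hp (Finset.subset_insert _ _) (le_refl _)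
    · exact ext_setSeq hp (le_refl _) (Finset.subset_insert _ _)

theorem decide1_mem {t : NSeq Pm} {p Γ Δ ts} (hp : t.sub? p = some (.node Γ Δ ts))
    (A : MBForm Pm) : ∃ Γ' Δ' ts',
      (decide1 t p Γ Δ A).sub? p = some (.node Γ' Δ' ts') ∧ (A ∈ Γ' ∨ A ∈ Δ') := by
  unfold decide1
  split
  · next h => exact ⟨Γ, Δ, ts, hp, h⟩
  · split
    · exact ⟨_, _, ts, sub?_setSeq_self hp _ _, Or.inl (Finset.mem_insert_self _ _)⟩
    · exact ⟨_, _, ts, sub?_setSeq_self hp _ _, Or.inr (Finset.mem_insert_self _ _)⟩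

theorem step_unprov {t : NSeq Pm} (hun : ¬ Provable true t) (p : List ℕ) (A : MBForm Pm) :
    ¬ Provable true (Step t p A) := by
  unfold Step
  split
  · exact hun
  · next Γ Δ ts hp =>
      split
      · next a B =>
          split
          · next hcond =>
              intro hpr
              exact hun (provable_spawn (d := Side.c) hp hcond.2.1 hcond.1 hpr)
          · exact decide1_unprov hp hun _
      · next a B =>
          split
          · next hcond =>
              intro hpr
              exact hun (provable_spawn (d := Side.o) hp hcond.2.1 hcond.1 hpr)
          · exact decide1_unprov hp hun _
      · exact decide1_unprov hp hun _

theorem step_ext (t : NSeq Pm) (p : List ℕ) (A : MBForm Pm) : Ext t (Step t p A) := by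
  unfold Step
  split
  · exact Ext.refl t
  · next Γ Δ ts hp =>
      split
      · split
        · exact ext_addChild hp _ _
        · exact decide1_ext hp _
      · split
        · exact ext_addChild hp _ _
        · exact decide1_ext hp _
      · exact decide1_ext hp _

theorem step_mem {t : NSeq Pm} {p Γ Δ ts} (hp : t.sub? p = some (.node Γ Δ ts))
    (A : MBForm Pm) : ∃ Γ' Δ' ts',
      (Step t p A).sub? p = some (.node Γ' Δ' ts') ∧ (A ∈ Γ' ∨ A ∈ Δ') := by
  unfold Step
  split
  · next h => rw [hp] at h; cases h
  · next Γ₁ Δ₁ ts₁ hp₁ =>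
      rw [hp] at hp₁
      obtain ⟨e1, e2, e3⟩ := NSeq.node.inj (Option.some.inj hp₁)
      subst e1; subst e2; subst e3
      split
      · split
        · next hcond =>
            obtain ⟨ts₂, h1, _, _⟩ := sub?_addChild p t hp _ _ p hp
            exact ⟨Γ, Δ, ts₂, h1, Or.inr hcond.1⟩
        · exact decide1_mem hp _
      · split
        · next hcond =>
            obtain ⟨ts₂, h1, _, _⟩ := sub?_addChild p t hp _ _ p hp
            exact ⟨Γ, Δ, ts₂, h1, Or.inr hcond.1⟩
        · exact decide1_mem hp _
      · exact decide1_mem hp _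

theorem decide1_sub?_p {t : NSeq Pm} {p Γ Δ ts} (hp : t.sub? p = some (.node Γ Δ ts))
    (A : MBForm Pm) : ∃ Γ' Δ', (decide1 t p Γ Δ A).sub? p = some (.node Γ' Δ' ts) := by
  unfold decide1
  split
  · exact ⟨Γ, Δ, hp⟩
  · split
    · exact ⟨_, _, sub?_setSeq_self hp _ _⟩
    · exact ⟨_, _, sub?_setSeq_self hp _ _⟩

theorem hasWit_mono {ts ts' : NSeqs Pm} (h : HasWit ts α d B)
    (hts : ∀ i l u, ts.get i = some (l, u) → ts'.get i = some (l, u)) : HasWit ts' α d B := by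
  obtain ⟨i, l, u, h1, h2, h3, h4⟩ := h
  exact ⟨i, l, u, hts i l u h1, h2, h3, h4⟩

open Classical in
theorem step_wit {t : NSeq Pm} {p Γ Δ ts} {a : Pm.J} {d : Side} {B : MBForm Pm}
    (hp : t.sub? p = some (.node Γ Δ ts)) (hB : mkBox d a B ∈ Δ) (hne : (a : ℝ) ≠ 1) :
    ∃ Γ' Δ' ts', (Step t p (mkBox d a B)).sub? p = some (.node Γ' Δ' ts') ∧
      HasWit ts' (a : ℝ) d B := by
  unfold Step
  split
  · next h => rw [hp] at h; cases h
  · next Γ₁ Δ₁ ts₁ hp₁ =>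
      rw [hp] at hp₁
      obtain ⟨e1, e2, e3⟩ := NSeq.node.inj (Option.some.inj hp₁)
      subst e1; subst e2; subst e3
      cases d with
      | c =>
          show ∃ Γ' Δ' ts', (if hcond : (MBForm.boxc a B) ∈ Δ ∧ (a : ℝ) ≠ 1 ∧
              ¬ HasWit ts (a : ℝ) Side.c B then
              t.addChild p ⟨(a : ℝ), a.2, hcond.2.1, Side.c⟩ (.node ∅ {B} .nil)
            else decide1 t p Γ Δ (.boxc a B)).sub? p = some (.node Γ' Δ' ts') ∧
            HasWit ts' (a : ℝ) Side.c B
          split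
          · obtain ⟨ts₂, h1, _, h3⟩ := sub?_addChild p t hp _ _ p hp
            refine ⟨Γ, Δ, ts₂, h1, ?_⟩
            rw [h3 rfl]
            exact ⟨ts.len, _, _, get_snoc_len ts _ _, rfl, rfl, ∅, {B}, NSeqs.nil, rfl,
              Finset.mem_singleton_self B⟩
          · next hcond =>
              have hw : HasWit ts (a : ℝ) Side.c B := by
                by_contra hnw
                exact hcond ⟨hB, hne, hnw⟩
              obtain ⟨Γ', Δ', h1⟩ := decide1_sub?_p hp (.boxc a B)
              exact ⟨Γ', Δ', ts, h1, hw⟩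
      | o =>
          show ∃ Γ' Δ' ts', (if hcond : (MBForm.boxo a B) ∈ Δ ∧ (a : ℝ) ≠ 1 ∧
              ¬ HasWit ts (a : ℝ) Side.o B then
              t.addChild p ⟨(a : ℝ), a.2, hcond.2.1, Side.o⟩ (.node ∅ {B} .nil)
            else decide1 t p Γ Δ (.boxo a B)).sub? p = some (.node Γ' Δ' ts') ∧
            HasWit ts' (a : ℝ) Side.o B
          split
          · obtain ⟨ts₂, h1, _, h3⟩ := sub?_addChild p t hp _ _ p hp
            refine ⟨Γ, Δ, ts₂, h1, ?_⟩
            rw [h3 rfl]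
            exact ⟨ts.len, _, _, get_snoc_len ts _ _, rfl, rfl, ∅, {B}, NSeqs.nil, rfl,
              Finset.mem_singleton_self B⟩
          · next hcond =>
              have hw : HasWit ts (a : ℝ) Side.o B := by
                by_contra hnw
                exact hcond ⟨hB, hne, hnw⟩
              obtain ⟨Γ', Δ', h1⟩ := decide1_sub?_p hp (.boxo a B)
              exact ⟨Γ', Δ', ts, h1, hw⟩

/-- The saturation ladder. -/
noncomputable def ladder (t0 : NSeq Pm) (g : ℕ → List ℕ × MBForm Pm) : ℕ → NSeq Pm
  | 0 => t0
  | n + 1 => Step (ladder t0 g n) (g n).1 (g n).2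

/- Limit of the ladder -/

def GamL (T : ℕ → NSeq Pm) (p : List ℕ) : Set (MBForm Pm) :=
  {A | ∃ n Γ Δ ts, (T n).sub? p = some (.node Γ Δ ts) ∧ A ∈ Γ}

def DelL (T : ℕ → NSeq Pm) (p : List ℕ) : Set (MBForm Pm) :=
  {A | ∃ n Γ Δ ts, (T n).sub? p = some (.node Γ Δ ts) ∧ A ∈ Δ}

def WorL (T : ℕ → NSeq Pm) : Set (List ℕ) := {p | ∃ n u, (T n).sub? p = some u}

def HasLabL (T : ℕ → NSeq Pm) (p : List ℕ) (i : ℕ) (l : MBLab Pm) : Prop :=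
  ∃ n Γ Δ ts u, (T n).sub? p = some (.node Γ Δ ts) ∧ ts.get i = some (l, u)

theorem ext_le {T : ℕ → NSeq Pm} (hmono : ∀ n, Ext (T n) (T (n + 1))) :
    ∀ {n m : ℕ}, n ≤ m → Ext (T n) (T m) := by
  intro n m h
  induction m, h using Nat.le_induction with
  | base => exact Ext.refl _
  | succ m hm ih => exact ih.trans (hmono m)

theorem node_at {T : ℕ → NSeq Pm} (hmono : ∀ n, Ext (T n) (T (n + 1))) {p n Γ Δ ts}
    (h : (T n).sub? p = some (.node Γ Δ ts)) {m} (hm : n ≤ m) :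
    ∃ Γ' Δ' ts', (T m).sub? p = some (.node Γ' Δ' ts') ∧ Γ ⊆ Γ' ∧ Δ ⊆ Δ' ∧ KidsLe ts ts' :=
  ext_le hmono hm p Γ Δ ts h

theorem gam_stage {T : ℕ → NSeq Pm} (hmono : ∀ n, Ext (T n) (T (n + 1))) {A p}
    (h : A ∈ GamL T p) (N : ℕ) :
    ∃ n, N ≤ n ∧ ∃ Γ Δ ts, (T n).sub? p = some (.node Γ Δ ts) ∧ A ∈ Γ := by
  obtain ⟨n0, Γ, Δ, ts, h1, h2⟩ := h
  obtain ⟨Γ', Δ', ts', h3, h4, -, -⟩ := node_at hmono h1 (le_max_left n0 N)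
  exact ⟨max n0 N, le_max_right _ _, Γ', Δ', ts', h3, h4 h2⟩

theorem del_stage {T : ℕ → NSeq Pm} (hmono : ∀ n, Ext (T n) (T (n + 1))) {A p}
    (h : A ∈ DelL T p) (N : ℕ) :
    ∃ n, N ≤ n ∧ ∃ Γ Δ ts, (T n).sub? p = some (.node Γ Δ ts) ∧ A ∈ Δ := by
  obtain ⟨n0, Γ, Δ, ts, h1, h2⟩ := h
  obtain ⟨Γ', Δ', ts', h3, -, h5, -⟩ := node_at hmono h1 (le_max_left n0 N)
  exact ⟨max n0 N, le_max_right _ _, Γ', Δ', ts', h3, h5 h2⟩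

theorem lab_stage {T : ℕ → NSeq Pm} (hmono : ∀ n, Ext (T n) (T (n + 1))) {p i l}
    (h : HasLabL T p i l) (N : ℕ) :
    ∃ n, N ≤ n ∧ ∃ Γ Δ ts u, (T n).sub? p = some (.node Γ Δ ts) ∧ ts.get i = some (l, u) := by
  obtain ⟨n0, Γ, Δ, ts, u, h1, h2⟩ := h
  obtain ⟨Γ', Δ', ts', h3, -, -, h6⟩ := node_at hmono h1 (le_max_left n0 N)
  obtain ⟨u', hu'⟩ := h6 i l u h2
  exact ⟨max n0 N, le_max_right _ _, Γ', Δ', ts', u', h3, hu'⟩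

theorem wor_stage {T : ℕ → NSeq Pm} (hmono : ∀ n, Ext (T n) (T (n + 1))) {p}
    (h : p ∈ WorL T) (N : ℕ) :
    ∃ n, N ≤ n ∧ ∃ Γ Δ ts, (T n).sub? p = some (.node Γ Δ ts) := by
  obtain ⟨n0, u, h1⟩ := h
  obtain ⟨Γ, Δ, ts, rfl⟩ := exists_node u
  obtain ⟨Γ', Δ', ts', h3, -, -, -⟩ := node_at hmono h1 (le_max_left n0 N)
  exact ⟨max n0 N, le_max_right _ _, Γ', Δ', ts', h3⟩

theorem lab_unique {T : ℕ → NSeq Pm} (hmono : ∀ n, Ext (T n) (T (n + 1))) {p i l l'}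
    (h : HasLabL T p i l) (h' : HasLabL T p i l') : l = l' := by
  obtain ⟨n0, Γ, Δ, ts, u, h1, h2⟩ := h
  obtain ⟨n, hn, Γ', Δ', ts', u', h3, h4⟩ := lab_stage hmono h' n0
  obtain ⟨Γ'', Δ'', ts'', h5, -, -, h6⟩ := node_at hmono h1 hn
  rw [h3] at h5
  obtain ⟨e1, e2, e3⟩ := NSeq.node.inj (Option.some.inj h5)
  obtain ⟨u'', hu''⟩ := h6 i l u h2
  rw [← e3, h4] at hu''
  exact ((Prod.mk.inj (Option.some.inj hu'')).1).symm

theorem sub?_child {t : NSeq Pm} {p : List ℕ} {Γ Δ ts i l u}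
    (hp : t.sub? p = some (.node Γ Δ ts)) (hg : ts.get i = some (l, u)) :
    t.sub? (p ++ [i]) = some u := by
  rw [sub?_append, hp, Option.bind_some]
  show NSeqs.subs? ts i [] = some u
  rw [subs?_eq, hg, Option.bind_some]
  cases u; rfl

theorem child_label {t : NSeq Pm} {p : List ℕ} {i : ℕ} {u} (h : t.sub? (p ++ [i]) = some u) :
    ∃ Γ Δ ts l, t.sub? p = some (.node Γ Δ ts) ∧ ts.get i = some (l, u) := by
  rw [sub?_append] at h
  cases hw : t.sub? p with
  | none => rw [hw] at h; cases h
  | some w =>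
      rw [hw] at h
      simp only [Option.bind_some] at h
      obtain ⟨Γ, Δ, ts, rfl⟩ := exists_node w
      have h' : NSeqs.subs? ts i [] = some u := h
      rw [subs?_eq] at h'
      cases hx : ts.get i with
      | none => rw [hx] at h'; cases h'
      | some x =>
          rw [hx] at h'
          simp only [Option.bind_some] at h'
          obtain ⟨Γ₂, Δ₂, ts₂, hx2⟩ := exists_node x.2
          rw [hx2] at h'
          have hu : x.2 = u := by rw [hx2]; exact Option.some.inj h'
          exact ⟨Γ, Δ, ts, x.1, rfl, by rw [hx]; exact congrArg some (Prod.ext rfl hu)⟩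

/- Fairness properties of the ladder -/

theorem lad_mono (t0 : NSeq Pm) (g : ℕ → List ℕ × MBForm Pm) :
    ∀ n, Ext (ladder t0 g n) (ladder t0 g (n + 1)) :=
  fun n => step_ext (ladder t0 g n) (g n).1 (g n).2

theorem lad_unprov {t0 : NSeq Pm} (g : ℕ → List ℕ × MBForm Pm)
    (h0 : ¬ Provable true t0) : ∀ n, ¬ Provable true (ladder t0 g n) := by
  intro n
  induction n with
  | zero => exact h0
  | succ n ih => exact step_unprov ih _ _

theorem lad_decided {t0 : NSeq Pm} {g : ℕ → List ℕ × MBForm Pm}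
    (hg : ∀ τ : List ℕ × MBForm Pm, ∀ k : ℕ, ∃ n, k ≤ n ∧ g n = τ)
    {p} (hp : p ∈ WorL (ladder t0 g)) (A : MBForm Pm) :
    A ∈ GamL (ladder t0 g) p ∨ A ∈ DelL (ladder t0 g) p := by
  obtain ⟨n0, -, Γ, Δ, ts, h1⟩ := wor_stage (lad_mono t0 g) hp 0
  obtain ⟨n, hn, hgn⟩ := hg (p, A) n0
  obtain ⟨Γ', Δ', ts', h2, -, -, -⟩ := node_at (lad_mono t0 g) h1 hn
  have hstep : ladder t0 g (n + 1) = Step (ladder t0 g n) p A := by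
    show Step (ladder t0 g n) (g n).1 (g n).2 = _
    rw [hgn]
  obtain ⟨Γ'', Δ'', ts'', h3, h4⟩ := step_mem h2 A
  rw [← hstep] at h3
  rcases h4 with h4 | h4
  · exact Or.inl ⟨n + 1, Γ'', Δ'', ts'', h3, h4⟩
  · exact Or.inr ⟨n + 1, Γ'', Δ'', ts'', h3, h4⟩

theorem lad_wit {t0 : NSeq Pm} {g : ℕ → List ℕ × MBForm Pm}
    (hg : ∀ τ : List ℕ × MBForm Pm, ∀ k : ℕ, ∃ n, k ≤ n ∧ g n = τ)
    {p} {a : Pm.J} {d : Side} {B : MBForm Pm}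
    (hB : mkBox d a B ∈ DelL (ladder t0 g) p) (hne : (a : ℝ) ≠ 1) :
    ∃ i l, HasLabL (ladder t0 g) p i l ∧ l.α = (a : ℝ) ∧ l.d = d ∧
      B ∈ DelL (ladder t0 g) (p ++ [i]) := by
  obtain ⟨n0, -, Γ, Δ, ts, h1, hmem⟩ := del_stage (lad_mono t0 g) hB 0
  obtain ⟨n, hn, hgn⟩ := hg (p, mkBox d a B) n0
  obtain ⟨Γ', Δ', ts', h2, -, h5, -⟩ := node_at (lad_mono t0 g) h1 hn
  have hstep : ladder t0 g (n + 1) = Step (ladder t0 g n) p (mkBox d a B) := by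
    show Step (ladder t0 g n) (g n).1 (g n).2 = _
    rw [hgn]
  obtain ⟨Γ'', Δ'', ts'', h3, hwit⟩ := step_wit h2 (h5 hmem) hne
  rw [← hstep] at h3
  obtain ⟨i, l, u, hgi, hα, hd, Γu, Δu, tsu, hu, hBu⟩ := hwit
  refine ⟨i, l, ⟨n + 1, Γ'', Δ'', ts'', u, h3, hgi⟩, hα, hd, ?_⟩
  have := sub?_child h3 hgi
  rw [hu] at this
  exact ⟨n + 1, Γu, Δu, tsu, this, hBu⟩

/- Interpolation of `J` -/

noncomputable def gammaN (Pm : MBParams) (α : ℝ) : ℝ := sInf (Pm.J ∩ Set.Ioi α)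

noncomputable def UU (Pm : MBParams) : Set ℝ :=
  Pm.J ∪ ((fun α => (α + gammaN Pm α) / 2) '' (Pm.J \ {1}))

theorem lt_one_of_mem {α : ℝ} (hα : α ∈ Pm.J) (hne : α ≠ 1) : α < 1 :=
  lt_of_le_of_ne (Pm.subI hα).2 hne

theorem gammaN_spec {α : ℝ} (hα : α ∈ Pm.J) (hne : α ≠ 1) :
    gammaN Pm α ∈ Pm.J ∧ α < gammaN Pm α ∧ gammaN Pm α ≤ 1 := by
  have hne' : (Pm.J ∩ Set.Ioi α).Nonempty := ⟨1, Pm.one_mem, lt_one_of_mem hα hne⟩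
  have hfin : (Pm.J ∩ Set.Ioi α).Finite := Pm.finite.inter_of_left _
  have hmem := hne'.csInf_mem hfin
  exact ⟨hmem.1, hmem.2, csInf_le hfin.bddBelow ⟨Pm.one_mem, lt_one_of_mem hα hne⟩⟩

theorem gammaN_le {α β : ℝ} (hβ : β ∈ Pm.J) (h : α < β) : gammaN Pm α ≤ β :=
  csInf_le (Pm.finite.inter_of_left _).bddBelow ⟨hβ, h⟩

theorem suc_eq {α : ℝ} (hα : α ∈ Pm.J) (hne : α ≠ 1) :
    Suc (UU Pm) α = (α + gammaN Pm α) / 2 := by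
  obtain ⟨hγJ, hγgt, hγle⟩ := gammaN_spec hα hne
  set m := (α + gammaN Pm α) / 2 with hm
  have hαm : α < m := by rw [hm]; linarith
  have hmγ : m < gammaN Pm α := by rw [hm]; linarith
  have hmem : m ∈ (UU Pm ∩ Set.Ioi α) ∪ {1} :=
    Or.inl ⟨Or.inr ⟨α, ⟨hα, hne⟩, rfl⟩, hαm⟩
  have hlb : ∀ x ∈ (UU Pm ∩ Set.Ioi α) ∪ {1}, m ≤ x := by
    rintro x (⟨hxU, hxα⟩ | hx1)
    · rcases hxU with hxJ | ⟨β, ⟨hβJ, hβne⟩, rfl⟩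
      · exact le_of_lt (lt_of_lt_of_le hmγ (gammaN_le hxJ hxα))
      · obtain ⟨hγβJ, hγβgt, -⟩ := gammaN_spec hβJ hβne
        rcases lt_trichotomy β α with hc | hc | hc
        · exfalso
          have : gammaN Pm β ≤ α := gammaN_le hα hc
          have : (β + gammaN Pm β) / 2 < α := by linarith
          exact absurd (Set.mem_Ioi.mp hxα) (by linarith)
        · subst hc; exact le_refl _
        · have h1 : gammaN Pm α ≤ β := gammaN_le hβJ hc
          have : β < (β + gammaN Pm β) / 2 := by linarith
          linarith
    · have : x = 1 := hx1
      linarith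
  have hbdd : BddBelow ((UU Pm ∩ Set.Ioi α) ∪ {1}) := ⟨m, fun x hx => hlb x hx⟩
  exact le_antisymm (csInf_le hbdd hmem) (le_csInf ⟨1, Or.inr rfl⟩ hlb)

theorem suc_gt {α : ℝ} (hα : α ∈ Pm.J) (hne : α ≠ 1) : α < Suc (UU Pm) α := by
  obtain ⟨-, hγgt, -⟩ := gammaN_spec hα hne
  rw [suc_eq hα hne]; linarith

theorem suc_lt_one {α : ℝ} (hα : α ∈ Pm.J) (hne : α ≠ 1) : Suc (UU Pm) α < 1 := by
  obtain ⟨-, hγgt, hγle⟩ := gammaN_spec hα hne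
  rw [suc_eq hα hne]; linarith

theorem suc_nonneg {α : ℝ} (hα : α ∈ Pm.J) (hne : α ≠ 1) : 0 ≤ Suc (UU Pm) α := by
  have := (Pm.subI hα).1
  have := suc_gt hα hne
  linarith

theorem le_of_le_suc {α β : ℝ} (hα : α ∈ Pm.J) (hne : α ≠ 1) (hβ : β ∈ Pm.J)
    (h : β ≤ Suc (UU Pm) α) : β ≤ α := by
  by_contra hc
  push_neg at hc
  have h1 : gammaN Pm α ≤ β := gammaN_le hβ hc
  obtain ⟨-, hγgt, -⟩ := gammaN_spec hα hne
  rw [suc_eq hα hne] at h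
  linarith

/- Limit closure lemmas -/

theorem node_det {t : NSeq Pm} {p Γ Δ ts Γ' Δ' ts'} (h : t.sub? p = some (.node Γ Δ ts))
    (h' : t.sub? p = some (.node Γ' Δ' ts')) : Γ = Γ' ∧ Δ = Δ' ∧ ts = ts' := by
  rw [h] at h'
  exact NSeq.node.inj (Option.some.inj h')

theorem gam_del_stage {T : ℕ → NSeq Pm} (hmono : ∀ n, Ext (T n) (T (n + 1))) {A B p q}
    (h1 : A ∈ GamL T p) (h2 : B ∈ DelL T q) :
    ∃ n Γ Δ ts Γ' Δ' ts', (T n).sub? p = some (.node Γ Δ ts) ∧ A ∈ Γ ∧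
      (T n).sub? q = some (.node Γ' Δ' ts') ∧ B ∈ Δ' := by
  obtain ⟨n1, -, Γ, Δ, ts, hs, hm⟩ := gam_stage hmono h1 0
  obtain ⟨n, hn, Γ', Δ', ts', hs', hm'⟩ := del_stage hmono h2 n1
  obtain ⟨Γ'', Δ'', ts'', hs'', hg, -, -⟩ := node_at hmono hs hn
  exact ⟨n, Γ'', Δ'', ts'', Γ', Δ', ts', hs'', hg hm, hs', hm'⟩

theorem gam_gam_stage {T : ℕ → NSeq Pm} (hmono : ∀ n, Ext (T n) (T (n + 1))) {A B p q}
    (h1 : A ∈ GamL T p) (h2 : B ∈ GamL T q) :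
    ∃ n Γ Δ ts Γ' Δ' ts', (T n).sub? p = some (.node Γ Δ ts) ∧ A ∈ Γ ∧
      (T n).sub? q = some (.node Γ' Δ' ts') ∧ B ∈ Γ' := by
  obtain ⟨n1, -, Γ, Δ, ts, hs, hm⟩ := gam_stage hmono h1 0
  obtain ⟨n, hn, Γ', Δ', ts', hs', hm'⟩ := gam_stage hmono h2 n1
  obtain ⟨Γ'', Δ'', ts'', hs'', hg, -, -⟩ := node_at hmono hs hn
  exact ⟨n, Γ'', Δ'', ts'', Γ', Δ', ts', hs'', hg hm, hs', hm'⟩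

theorem del_del_stage {T : ℕ → NSeq Pm} (hmono : ∀ n, Ext (T n) (T (n + 1))) {A B p q}
    (h1 : A ∈ DelL T p) (h2 : B ∈ DelL T q) :
    ∃ n Γ Δ ts Γ' Δ' ts', (T n).sub? p = some (.node Γ Δ ts) ∧ A ∈ Δ ∧
      (T n).sub? q = some (.node Γ' Δ' ts') ∧ B ∈ Δ' := by
  obtain ⟨n1, -, Γ, Δ, ts, hs, hm⟩ := del_stage hmono h1 0
  obtain ⟨n, hn, Γ', Δ', ts', hs', hm'⟩ := del_stage hmono h2 n1
  obtain ⟨Γ'', Δ'', ts'', hs'', -, hd, -⟩ := node_at hmono hs hn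
  exact ⟨n, Γ'', Δ'', ts'', Γ', Δ', ts', hs'', hd hm, hs', hm'⟩

section LimClosure

variable {T : ℕ → NSeq Pm} (hmono : ∀ n, Ext (T n) (T (n + 1)))
  (hun : ∀ n, ¬ Provable true (T n))
include hmono hun

theorem lim_axId {A p} (h1 : A ∈ GamL T p) (h2 : A ∈ DelL T p) : False := by
  obtain ⟨n, Γ, Δ, ts, Γ', Δ', ts', hs, hm, hs', hm'⟩ := gam_del_stage hmono h1 h2
  obtain ⟨e1, -, -⟩ := node_det hs hs'
  exact hun n (provable_axId hs' (e1 ▸ hm) hm')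

theorem lim_top {p} (h : (MBForm.top : MBForm Pm) ∈ DelL T p) : False := by
  obtain ⟨n, -, Γ, Δ, ts, hs, hm⟩ := del_stage hmono h 0
  exact hun n (Provable.axTop (subAt_of_sub? _ _ _ hs) hm)

theorem lim_bot {p} (h : (MBForm.bot : MBForm Pm) ∈ GamL T p) : False := by
  obtain ⟨n, -, Γ, Δ, ts, hs, hm⟩ := gam_stage hmono h 0
  exact hun n (Provable.axBot (subAt_of_sub? _ _ _ hs) hm)

theorem lim_boxo1 {A : MBForm Pm} {p} (h : MBForm.boxo ⟨1, Pm.one_mem⟩ A ∈ DelL T p) :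
    False := by
  obtain ⟨n, -, Γ, Δ, ts, hs, hm⟩ := del_stage hmono h 0
  exact hun n (Provable.axBoxO1 (subAt_of_sub? _ _ _ hs) hm)

theorem lim_negL {A : MBForm Pm} {p} (h1 : MBForm.neg A ∈ GamL T p) (h2 : A ∈ GamL T p) :
    False := by
  obtain ⟨n, Γ, Δ, ts, Γ', Δ', ts', hs, hm, hs', hm'⟩ := gam_gam_stage hmono h1 h2
  obtain ⟨e1, -, -⟩ := node_det hs hs'
  exact hun n (provable_negL hs' (e1 ▸ hm) hm')

theorem lim_negR {A : MBForm Pm} {p} (h1 : MBForm.neg A ∈ DelL T p) (h2 : A ∈ DelL T p) :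
    False := by
  obtain ⟨n, Γ, Δ, ts, Γ', Δ', ts', hs, hm, hs', hm'⟩ := del_del_stage hmono h1 h2
  obtain ⟨-, e2, -⟩ := node_det hs hs'
  exact hun n (provable_negR hs' (e2 ▸ hm) hm')

theorem lim_andL {A B : MBForm Pm} {p} (h1 : MBForm.conj A B ∈ GamL T p)
    (h2 : A ∈ DelL T p ∨ B ∈ DelL T p) : False := by
  rcases h2 with h2 | h2
  · obtain ⟨n, Γ, Δ, ts, Γ', Δ', ts', hs, hm, hs', hm'⟩ := gam_del_stage hmono h1 h2
    obtain ⟨e1, -, -⟩ := node_det hs hs'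
    exact hun n (provable_andL hs' (e1 ▸ hm) (Or.inl hm'))
  · obtain ⟨n, Γ, Δ, ts, Γ', Δ', ts', hs, hm, hs', hm'⟩ := gam_del_stage hmono h1 h2
    obtain ⟨e1, -, -⟩ := node_det hs hs'
    exact hun n (provable_andL hs' (e1 ▸ hm) (Or.inr hm'))

theorem lim_andR {A B : MBForm Pm} {p} (h1 : MBForm.conj A B ∈ DelL T p)
    (h2 : A ∈ GamL T p) (h3 : B ∈ GamL T p) : False := by
  obtain ⟨n1, -, Γ1, Δ1, ts1, hs1, hm1⟩ := del_stage hmono h1 0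
  obtain ⟨n2, hn2, Γ2, Δ2, ts2, hs2, hm2⟩ := gam_stage hmono h2 n1
  obtain ⟨n3, hn3, Γ3, Δ3, ts3, hs3, hm3⟩ := gam_stage hmono h3 n2
  obtain ⟨Γ4, Δ4, ts4, hs4, -, hd4, -⟩ := node_at hmono hs1 (hn2.trans hn3)
  obtain ⟨Γ5, Δ5, ts5, hs5, hg5, -, -⟩ := node_at hmono hs2 hn3
  obtain ⟨e1, e2, -⟩ := node_det hs4 hs3
  obtain ⟨e3, -, -⟩ := node_det hs5 hs3
  exact hun n3 (provable_andR hs3 (e2 ▸ hd4 hm1) (e3 ▸ hg5 hm2) hm3)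

theorem lim_boxLself {A : MBForm Pm} {α : Pm.J} {d : Side} {p}
    (hc : ¬((α : ℝ) = 1 ∧ d = Side.o)) (h1 : mkBox d α A ∈ GamL T p) (h2 : A ∈ DelL T p) :
    False := by
  obtain ⟨n, Γ, Δ, ts, Γ', Δ', ts', hs, hm, hs', hm'⟩ := gam_del_stage hmono h1 h2
  obtain ⟨e1, -, -⟩ := node_det hs hs'
  exact hun n (provable_boxLself hs' hc (e1 ▸ hm) hm')

theorem lim_boxRself {A : MBForm Pm} {p} (h1 : MBForm.boxc ⟨1, Pm.one_mem⟩ A ∈ DelL T p)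
    (h2 : A ∈ GamL T p) : False := by
  obtain ⟨n, Γ, Δ, ts, Γ', Δ', ts', hs, hm, hs', hm'⟩ := gam_del_stage hmono h2 h1
  obtain ⟨e1, -, -⟩ := node_det hs hs'
  exact hun n (provable_boxRself hs' hm' (e1 ▸ hm))

theorem lim_boxC0 {A : MBForm Pm} {p q} (h1 : MBForm.boxc ⟨0, Pm.zero_mem⟩ A ∈ GamL T p)
    (h2 : A ∈ DelL T q) : False := by
  obtain ⟨n, Γ, Δ, ts, Γ', Δ', ts', hs, hm, hs', hm'⟩ := gam_del_stage hmono h1 h2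
  exact hun n (provable_boxC0 hs hs' hm hm')

theorem lim_boxL {A : MBForm Pm} {α : Pm.J} {d : Side} {p i l}
    (hl : HasLabL T p i l) (hpl : pleq (α : ℝ) d l.α l.d)
    (h1 : mkBox d α A ∈ GamL T p) (h2 : A ∈ DelL T (p ++ [i])) : False := by
  obtain ⟨n1, -, Γ1, Δ1, ts1, hs1, hm1⟩ := gam_stage hmono h1 0
  obtain ⟨n2, hn2, Γ2, Δ2, ts2, u2, hs2, hg2⟩ := lab_stage hmono hl n1
  obtain ⟨n3, hn3, Γ3, Δ3, ts3, hs3, hm3⟩ := del_stage hmono h2 n2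
  obtain ⟨Γ4, Δ4, ts4, hs4, hg4, -, -⟩ := node_at hmono hs1 (hn2.trans hn3)
  obtain ⟨Γ5, Δ5, ts5, hs5, -, -, hk5⟩ := node_at hmono hs2 hn3
  obtain ⟨e1, -, e3⟩ := node_det hs4 hs5
  obtain ⟨u5, hu5⟩ := hk5 i l u2 hg2
  exact hun n3 (provable_boxL hs5 hu5 hs3 hpl (e1 ▸ hg4 hm1) hm3)

theorem lim_boxLsym {A : MBForm Pm} {α : Pm.J} {d : Side} {p i l}
    (hl : HasLabL T p i l) (hpl : pleq (α : ℝ) d l.α l.d)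
    (h1 : mkBox d α A ∈ GamL T (p ++ [i])) (h2 : A ∈ DelL T p) : False := by
  obtain ⟨n1, -, Γ1, Δ1, ts1, hs1, hm1⟩ := gam_stage hmono h1 0
  obtain ⟨n2, hn2, Γ2, Δ2, ts2, u2, hs2, hg2⟩ := lab_stage hmono hl n1
  obtain ⟨n3, hn3, Γ3, Δ3, ts3, hs3, hm3⟩ := del_stage hmono h2 n2
  obtain ⟨Γ4, Δ4, ts4, hs4, hg4, -, -⟩ := node_at hmono hs1 (hn2.trans hn3)
  obtain ⟨Γ5, Δ5, ts5, hs5, -, -, hk5⟩ := node_at hmono hs2 hn3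
  obtain ⟨-, -, e3⟩ := node_det hs5 hs3
  obtain ⟨u5, hu5⟩ := hk5 i l u2 hg2
  exact hun n3 (provable_boxLsym hs3 (e3 ▸ hu5) hs4 hpl (hg4 hm1) hm3)

end LimClosure

/- The canonical relation on the limit -/

noncomputable def vlab (U : Set ℝ) (l : MBLab Pm) : ℝ :=
  if l.d = Side.c then l.α else Suc U l.α

theorem vlab_nonneg (l : MBLab Pm) : 0 ≤ vlab (UU Pm) l := by
  unfold vlab
  split
  · exact (Pm.subI l.memJ).1
  · exact suc_nonneg l.memJ l.ne_one

theorem vlab_lt_one (l : MBLab Pm) : vlab (UU Pm) l < 1 := by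
  unfold vlab
  split
  · exact lt_one_of_mem l.memJ l.ne_one
  · exact suc_lt_one l.memJ l.ne_one

noncomputable def evL (T : ℕ → NSeq Pm) (U : Set ℝ) (p q : List ℕ) : ℝ :=
  sSup {x | ∃ i l, q = p ++ [i] ∧ HasLabL T p i l ∧ x = vlab U l}

noncomputable def RLim (T : ℕ → NSeq Pm) (U : Set ℝ) (p q : List ℕ) : ℝ :=
  if p = q then 1 else max (evL T U p q) (evL T U q p)

theorem RLim_self (T : ℕ → NSeq Pm) (U : Set ℝ) (p : List ℕ) : RLim T U p p = 1 :=
  if_pos rfl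

theorem evL_child {T : ℕ → NSeq Pm} (hmono : ∀ n, Ext (T n) (T (n + 1))) {p i l}
    (hl : HasLabL T p i l) (U : Set ℝ) : evL T U p (p ++ [i]) = vlab U l := by
  have hset : {x | ∃ i' l', p ++ [i] = p ++ [i'] ∧ HasLabL T p i' l' ∧ x = vlab U l'} =
      {vlab U l} := by
    ext x
    simp only [Set.mem_setOf_eq, Set.mem_singleton_iff]
    constructor
    · rintro ⟨i', l', heq, hl', rfl⟩
      have hii : i = i' := by simpa using List.append_cancel_left heq
      subst hii
      rw [lab_unique hmono hl' hl]
    · rintro rfl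
      exact ⟨i, l, rfl, hl, rfl⟩
  unfold evL
  rw [hset, csSup_singleton]

theorem evL_nochild {T : ℕ → NSeq Pm} {U : Set ℝ} {p q : List ℕ}
    (h : ∀ i l, ¬(q = p ++ [i] ∧ HasLabL T p i l)) : evL T U p q = 0 := by
  unfold evL
  have hset : {x | ∃ i l, q = p ++ [i] ∧ HasLabL T p i l ∧ x = vlab U l} = (∅ : Set ℝ) := by
    ext x
    simp only [Set.mem_setOf_eq, Set.mem_empty_iff_false, iff_false]
    rintro ⟨i, l, heq, hl, -⟩
    exact h i l ⟨heq, hl⟩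
  rw [hset]
  exact Real.sSup_empty

theorem evL_cases {T : ℕ → NSeq Pm} (hmono : ∀ n, Ext (T n) (T (n + 1))) (U : Set ℝ)
    (p q : List ℕ) : evL T U p q = 0 ∨
      ∃ i l, q = p ++ [i] ∧ HasLabL T p i l ∧ evL T U p q = vlab U l := by
  by_cases h : ∃ i l, q = p ++ [i] ∧ HasLabL T p i l
  · obtain ⟨i, l, rfl, hl⟩ := h
    exact Or.inr ⟨i, l, rfl, hl, evL_child hmono hl U⟩
  · push_neg at h
    exact Or.inl (evL_nochild (fun i l hc => h i l hc.1 hc.2))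

theorem parent_ne_child {p : List ℕ} {i : ℕ} (q : List ℕ) (hq : q = p ++ [i]) :
    ∀ j l', ¬(p = q ++ [j] ∧ l') := by
  rintro j l' ⟨hp, -⟩
  rw [hq] at hp
  have := congrArg List.length hp
  simp at this

theorem self_ne_child (p : List ℕ) (i : ℕ) : p ≠ p ++ [i] := by
  intro h
  have := congrArg List.length h
  simp at this

theorem RLim_child {T : ℕ → NSeq Pm} (hmono : ∀ n, Ext (T n) (T (n + 1))) {p i l}
    (hl : HasLabL T p i l) : RLim T (UU Pm) p (p ++ [i]) = vlab (UU Pm) l := by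
  unfold RLim
  rw [if_neg (self_ne_child p i), evL_child hmono hl,
    evL_nochild (fun j l' hc => (parent_ne_child _ rfl j True ⟨hc.1, trivial⟩ : False)),
    max_eq_left (vlab_nonneg l)]

theorem RLim_cases {T : ℕ → NSeq Pm} (hmono : ∀ n, Ext (T n) (T (n + 1)))
    {p q : List ℕ} (hne : p ≠ q) :
    RLim T (UU Pm) p q = 0 ∨
    (∃ i l, q = p ++ [i] ∧ HasLabL T p i l ∧ RLim T (UU Pm) p q = vlab (UU Pm) l) ∨
    (∃ i l, p = q ++ [i] ∧ HasLabL T q i l ∧ RLim T (UU Pm) p q = vlab (UU Pm) l) := by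
  have hrw : RLim T (UU Pm) p q = max (evL T (UU Pm) p q) (evL T (UU Pm) q p) := if_neg hne
  rcases evL_cases hmono (UU Pm) p q with h1 | ⟨i, l, hq, hl, h1⟩
  · rcases evL_cases hmono (UU Pm) q p with h2 | ⟨j, l', hp, hl', h2⟩
    · left; rw [hrw, h1, h2]; simp
    · right; right
      exact ⟨j, l', hp, hl', by
        rw [hrw, h1, h2]; exact max_eq_right (vlab_nonneg _)⟩
  · have h2 : evL T (UU Pm) q p = 0 := evL_nochild (by
      rintro j l' ⟨hp, -⟩
      rw [hq] at hp
      have := congrArg List.length hp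
      simp at this)
    right; left
    exact ⟨i, l, hq, hl, by rw [hrw, h1, h2]; exact max_eq_left (vlab_nonneg _)⟩

theorem evL_bounds {T : ℕ → NSeq Pm} (hmono : ∀ n, Ext (T n) (T (n + 1)))
    (p q : List ℕ) : 0 ≤ evL T (UU Pm) p q ∧ evL T (UU Pm) p q < 1 := by
  rcases evL_cases hmono (UU Pm) p q with h | ⟨i, l, -, -, h⟩
  · rw [h]; exact ⟨le_refl _, one_pos⟩
  · rw [h]; exact ⟨vlab_nonneg l, vlab_lt_one l⟩

theorem RLim_mem_Icc {T : ℕ → NSeq Pm} (hmono : ∀ n, Ext (T n) (T (n + 1)))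
    (p q : List ℕ) : RLim T (UU Pm) p q ∈ Set.Icc (0 : ℝ) 1 := by
  unfold RLim
  split
  · exact ⟨zero_le_one, le_refl _⟩
  · obtain ⟨ha, hb⟩ := evL_bounds hmono p q
    obtain ⟨hc, hd⟩ := evL_bounds hmono q p
    exact ⟨le_max_of_le_left ha, le_of_lt (max_lt hb hd)⟩

theorem RLim_eq_one_iff {T : ℕ → NSeq Pm} (hmono : ∀ n, Ext (T n) (T (n + 1)))
    (p q : List ℕ) : RLim T (UU Pm) p q = 1 ↔ p = q := by
  constructor
  · intro h
    by_contra hne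
    rw [RLim, if_neg hne] at h
    obtain ⟨-, hb⟩ := evL_bounds (T := T) hmono p q
    obtain ⟨-, hd⟩ := evL_bounds (T := T) hmono q p
    exact absurd h (ne_of_lt (max_lt hb hd))
  · intro h; rw [h]; exact RLim_self T (UU Pm) q

theorem RLim_symm (T : ℕ → NSeq Pm) (U : Set ℝ) (p q : List ℕ) :
    RLim T U p q = RLim T U q p := by
  unfold RLim
  by_cases h : p = q
  · rw [if_pos h, if_pos h.symm]
  · rw [if_neg h, if_neg (fun hh => h hh.symm), max_comm]

theorem del_wor {T : ℕ → NSeq Pm} {A : MBForm Pm} {p} (h : A ∈ DelL T p) : p ∈ WorL T := by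
  obtain ⟨n, Γ, Δ, ts, hs, -⟩ := h
  exact ⟨n, _, hs⟩

theorem gam_wor {T : ℕ → NSeq Pm} {A : MBForm Pm} {p} (h : A ∈ GamL T p) : p ∈ WorL T := by
  obtain ⟨n, Γ, Δ, ts, hs, -⟩ := h
  exact ⟨n, _, hs⟩

/- The canonical model and the truth lemma -/

def WL (T : ℕ → NSeq Pm) : Type := {q : List ℕ // q ∈ WorL T}

noncomputable def RWL (T : ℕ → NSeq Pm) : WL T → WL T → ℝ :=
  fun x y => RLim T (UU Pm) x.val y.val

def VWL (T : ℕ → NSeq Pm) : ℕ → Set (WL T) :=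
  fun n => {q : WL T | MBForm.var n ∈ GamL T q.val}

theorem truth {T : ℕ → NSeq Pm} (hmono : ∀ n, Ext (T n) (T (n + 1)))
    (hun : ∀ n, ¬ Provable true (T n))
    (hdec : ∀ p, p ∈ WorL T → ∀ A : MBForm Pm, A ∈ GamL T p ∨ A ∈ DelL T p)
    (hwit : ∀ (p : List ℕ) (a : Pm.J) (d : Side) (B : MBForm Pm), mkBox d a B ∈ DelL T p →
      (a : ℝ) ≠ 1 → ∃ i l, HasLabL T p i l ∧ l.α = (a : ℝ) ∧ l.d = d ∧
        B ∈ DelL T (p ++ [i])) :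
    ∀ (A : MBForm Pm) (p : List ℕ) (hp : p ∈ WorL T),
      (A ∈ GamL T p → (⟨p, hp⟩ : WL T) ∈ MBForm.valR (RWL T) (VWL T) A) ∧
      (A ∈ DelL T p → (⟨p, hp⟩ : WL T) ∉ MBForm.valR (RWL T) (VWL T) A) := by
  intro A
  induction A with
  | var n =>
      intro p hp
      exact ⟨fun h => h, fun h hmem => lim_axId hmono hun hmem h⟩
  | top =>
      intro p hp
      exact ⟨fun _ => Set.mem_univ _, fun h => (lim_top hmono hun h).elim⟩
  | bot =>
      intro p hp
      exact ⟨fun h => (lim_bot hmono hun h).elim, fun _ hmem => hmem⟩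
  | neg A ih =>
      intro p hp
      constructor
      · intro h hval
        rcases hdec p hp A with hA | hA
        · exact lim_negL hmono hun h hA
        · exact (ih p hp).2 hA hval
      · intro h hval
        rcases hdec p hp A with hA | hA
        · exact hval ((ih p hp).1 hA)
        · exact lim_negR hmono hun h hA
  | conj A B ihA ihB =>
      intro p hp
      constructor
      · intro h
        have hA : A ∈ GamL T p := by
          rcases hdec p hp A with hA | hA
          · exact hA
          · exact (lim_andL hmono hun h (Or.inl hA)).elim
        have hB : B ∈ GamL T p := by
          rcases hdec p hp B with hB | hB
          · exact hB
          · exact (lim_andL hmono hun h (Or.inr hB)).elim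
        exact ⟨(ihA p hp).1 hA, (ihB p hp).1 hB⟩
      · intro h hval
        rcases hdec p hp A with hA | hA
        · rcases hdec p hp B with hB | hB
          · exact lim_andR hmono hun h hA hB
          · exact (ihB p hp).2 hB hval.2
        · exact (ihA p hp).2 hA hval.1
  | boxc a A ih =>
      intro p hp
      constructor
      · intro h q hq
        obtain ⟨qv, hqv⟩ := q
        have hAq : A ∈ GamL T qv := by
          rcases hdec qv hqv A with hA | hA
          · exact hA
          · exfalso
            by_cases hpq : p = qv
            · subst hpq
              exact lim_boxLself (α := a) (d := Side.c) hmono hun (by simp) h hA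
            · rcases RLim_cases hmono hpq with h0 | ⟨i, l, hqe, hl, hv⟩ | ⟨i, l, hpe, hl, hv⟩
              · have ha0 : (a : ℝ) = 0 := le_antisymm (by
                    have : (a : ℝ) ≤ RLim T (UU Pm) p qv := hq
                    rwa [h0] at this) (Pm.subI a.2).1
                have haa : a = ⟨0, Pm.zero_mem⟩ := Subtype.ext ha0
                rw [haa] at h
                exact lim_boxC0 hmono hun h hA
              · have hq' : (a : ℝ) ≤ vlab (UU Pm) l := by
                  have : (a : ℝ) ≤ RLim T (UU Pm) p qv := hq
                  rwa [hv] at this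
                have hpl : pleq (a : ℝ) Side.c l.α l.d := by
                  cases hld : l.d with
                  | c =>
                      simp only [vlab, hld, if_true] at hq'
                      exact hq'
                  | o =>
                      simp only [vlab, hld] at hq'
                      rw [if_neg (by simp : ¬(Side.o = Side.c))] at hq'
                      exact le_of_le_suc l.memJ l.ne_one a.2 hq'
                rw [hqe] at hA
                exact lim_boxL hmono hun hl hpl h hA
              · have hq' : (a : ℝ) ≤ vlab (UU Pm) l := by
                  have : (a : ℝ) ≤ RLim T (UU Pm) p qv := hq
                  rwa [hv] at this
                have hpl : pleq (a : ℝ) Side.c l.α l.d := by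
                  cases hld : l.d with
                  | c =>
                      simp only [vlab, hld, if_true] at hq'
                      exact hq'
                  | o =>
                      simp only [vlab, hld] at hq'
                      rw [if_neg (by simp : ¬(Side.o = Side.c))] at hq'
                      exact le_of_le_suc l.memJ l.ne_one a.2 hq'
                rw [hpe] at h
                exact lim_boxLsym hmono hun hl hpl h hA
        exact (ih qv hqv).1 hAq
      · intro h hval
        by_cases hne : (a : ℝ) = 1
        · have haa : a = ⟨1, Pm.one_mem⟩ := Subtype.ext hne
          rw [haa] at h
          have hA : A ∈ DelL T p := by
            rcases hdec p hp A with hA | hA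
            · exact (lim_boxRself hmono hun h hA).elim
            · exact hA
          refine (ih p hp).2 hA (hval ⟨p, hp⟩ ?_)
          show (a : ℝ) ≤ RLim T (UU Pm) p p
          rw [RLim_self, hne]
        · obtain ⟨i, l, hl, hlα, hld, hBd⟩ := hwit p a Side.c A h hne
          have hqw : p ++ [i] ∈ WorL T := del_wor hBd
          refine (ih (p ++ [i]) hqw).2 hBd (hval ⟨p ++ [i], hqw⟩ ?_)
          show (a : ℝ) ≤ RLim T (UU Pm) p (p ++ [i])
          rw [RLim_child hmono hl]
          simp [vlab, hld, hlα]
  | boxo a A ih =>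
      intro p hp
      constructor
      · intro h q hq
        obtain ⟨qv, hqv⟩ := q
        have hAq : A ∈ GamL T qv := by
          rcases hdec qv hqv A with hA | hA
          · exact hA
          · exfalso
            by_cases hpq : p = qv
            · subst hpq
              have hne : (a : ℝ) ≠ 1 := by
                have : (a : ℝ) < RLim T (UU Pm) p p := hq
                rw [RLim_self] at this
                exact ne_of_lt this
              exact lim_boxLself (α := a) (d := Side.o) hmono hun
                (fun hc => hne hc.1) h hA
            · rcases RLim_cases hmono hpq with h0 | ⟨i, l, hqe, hl, hv⟩ | ⟨i, l, hpe, hl, hv⟩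
              · exfalso
                have : (a : ℝ) < RLim T (UU Pm) p qv := hq
                rw [h0] at this
                exact absurd this (not_lt.mpr (Pm.subI a.2).1)
              · have hq' : (a : ℝ) < vlab (UU Pm) l := by
                  have : (a : ℝ) < RLim T (UU Pm) p qv := hq
                  rwa [hv] at this
                have hpl : pleq (a : ℝ) Side.o l.α l.d := by
                  cases hld : l.d with
                  | c =>
                      simp only [vlab, hld, if_true] at hq'
                      exact hq'
                  | o =>
                      simp only [vlab, hld] at hq'
                      rw [if_neg (by simp : ¬(Side.o = Side.c))] at hq'
                      exact le_of_le_suc l.memJ l.ne_one a.2 (le_of_lt hq')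
                rw [hqe] at hA
                exact lim_boxL hmono hun hl hpl h hA
              · have hq' : (a : ℝ) < vlab (UU Pm) l := by
                  have : (a : ℝ) < RLim T (UU Pm) p qv := hq
                  rwa [hv] at this
                have hpl : pleq (a : ℝ) Side.o l.α l.d := by
                  cases hld : l.d with
                  | c =>
                      simp only [vlab, hld, if_true] at hq'
                      exact hq'
                  | o =>
                      simp only [vlab, hld] at hq'
                      rw [if_neg (by simp : ¬(Side.o = Side.c))] at hq'
                      exact le_of_le_suc l.memJ l.ne_one a.2 (le_of_lt hq')
                rw [hpe] at h
                exact lim_boxLsym hmono hun hl hpl h hA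
        exact (ih qv hqv).1 hAq
      · intro h hval
        by_cases hne : (a : ℝ) = 1
        · have haa : a = ⟨1, Pm.one_mem⟩ := Subtype.ext hne
          rw [haa] at h
          exact lim_boxo1 hmono hun h
        · obtain ⟨i, l, hl, hlα, hld, hBd⟩ := hwit p a Side.o A h hne
          have hqw : p ++ [i] ∈ WorL T := del_wor hBd
          refine (ih (p ++ [i]) hqw).2 hBd (hval ⟨p ++ [i], hqw⟩ ?_)
          show (a : ℝ) < RLim T (UU Pm) p (p ++ [i])
          rw [RLim_child hmono hl]
          simp only [vlab, hld, hlα]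
          rw [if_neg (by simp : ¬(Side.o = Side.c))]
          exact suc_gt a.2 hne

end Aux


/-- Completeness of NSMB: if a nested-sequent is valid, then
it is provable in NSMB. -/
theorem completeness_NSMB {Pm : MBParams} (t : NSeq Pm) (h : NSValid t) :
    Provable true t := by
  classical
  by_contra h0
  have hne : Nonempty (List ℕ × MBForm Pm) := ⟨([], MBForm.top)⟩
  obtain ⟨f, hf⟩ := exists_surjective_nat (List ℕ × MBForm Pm)
  have hg : ∀ τ : List ℕ × MBForm Pm, ∀ k : ℕ,
      ∃ n, k ≤ n ∧ (fun n => f (Nat.unpair n).2) n = τ := by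
    intro τ k
    obtain ⟨m, hm⟩ := hf τ
    exact ⟨Nat.pair k m, Nat.left_le_pair k m, by simp [Nat.unpair_pair, hm]⟩
  set g : ℕ → List ℕ × MBForm Pm := fun n => f (Nat.unpair n).2 with hgdef
  set T : ℕ → NSeq Pm := ladder t g with hT
  have hmono : ∀ n, Ext (T n) (T (n + 1)) := lad_mono t g
  have hun : ∀ n, ¬ Provable true (T n) := lad_unprov g h0
  have hdec : ∀ p, p ∈ WorL T → ∀ A : MBForm Pm, A ∈ GamL T p ∨ A ∈ DelL T p :=
    fun p hp A => lad_decided hg hp A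
  have hwit : ∀ (p : List ℕ) (a : Pm.J) (d : Side) (B : MBForm Pm),
      mkBox d a B ∈ DelL T p → (a : ℝ) ≠ 1 →
      ∃ i l, HasLabL T p i l ∧ l.α = (a : ℝ) ∧ l.d = d ∧ B ∈ DelL T (p ++ [i]) :=
    fun p a d B hB hne' => lad_wit hg hB hne'
  have htruth := truth hmono hun hdec hwit
  have hroot : ([] : List ℕ) ∈ WorL T := ⟨0, t, by cases t; rfl⟩
  let F : EQLFrame := {
    S := WL T
    nonempty := ⟨⟨[], hroot⟩⟩
    R := RWL T
    mem_Icc := fun s u => RLim_mem_Icc hmono s.val u.val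
    eq_one_iff := fun s u => by
      constructor
      · intro hh
        exact Subtype.ext ((RLim_eq_one_iff hmono s.val u.val).mp hh)
      · rintro rfl
        exact RLim_self T (UU Pm) s.val
    symm := fun s u => RLim_symm T (UU Pm) s.val u.val }
  let M : MBRealization Pm := {
    F := F
    P := {X | ∃ A : MBForm Pm, X = MBForm.valR (RWL T) (VWL T) A}
    univ_mem := ⟨MBForm.top, rfl⟩
    empty_mem := ⟨MBForm.bot, rfl⟩
    inter_mem := by rintro X ⟨A, rfl⟩ Y ⟨B, rfl⟩; exact ⟨A.conj B, rfl⟩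
    compl_mem := by rintro X ⟨A, rfl⟩; exact ⟨A.neg, rfl⟩
    boxc_mem := by rintro α hα X ⟨A, rfl⟩; exact ⟨MBForm.boxc ⟨α, hα⟩ A, rfl⟩
    boxo_mem := by rintro α hα X ⟨A, rfl⟩; exact ⟨MBForm.boxo ⟨α, hα⟩ A, rfl⟩
    V := VWL T
    V_mem := fun n => ⟨MBForm.var n, rfl⟩ }
  let E : List ℕ → M.F.S := fun p => if hw : p ∈ WorL T then ⟨p, hw⟩ else ⟨[], hroot⟩
  have hemb : IsEmb M t E := by
    intro p Γ Δ ts i l u hsub hget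
    have hp0 : (T 0).sub? p = some (.node Γ Δ ts) := sub?_of_subAt hsub
    have hpw : p ∈ WorL T := ⟨0, _, hp0⟩
    have hcw : p ++ [i] ∈ WorL T := ⟨0, u, sub?_child hp0 hget⟩
    have hlab : HasLabL T p i l := ⟨0, Γ, Δ, ts, u, hp0, hget⟩
    have hE1 : E p = ⟨p, hpw⟩ := dif_pos hpw
    have hE2 : E (p ++ [i]) = ⟨p ++ [i], hcw⟩ := dif_pos hcw
    have hR : M.F.R (E p) (E (p ++ [i])) = vlab (UU Pm) l := by
      rw [hE1, hE2]
      exact RLim_child hmono hlab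
    constructor
    · intro hd
      rw [hR]
      simp [vlab, hd]
    · intro hd
      rw [hR]
      simp only [vlab, hd]
      rw [if_neg (by simp : ¬(Side.o = Side.c))]
      exact suc_gt l.memJ l.ne_one
  have hfalse : FalseUnder M t E := by
    intro p Γ Δ ts hsub
    have hp0 : (T 0).sub? p = some (.node Γ Δ ts) := sub?_of_subAt hsub
    have hpw : p ∈ WorL T := ⟨0, _, hp0⟩
    have hE1 : E p = ⟨p, hpw⟩ := dif_pos hpw
    constructor
    · intro A hA
      have hg' : A ∈ GamL T p := ⟨0, Γ, Δ, ts, hp0, hA⟩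
      rw [hE1]
      exact (htruth A p hpw).1 hg'
    · intro A hA
      have hd' : A ∈ DelL T p := ⟨0, Γ, Δ, ts, hp0, hA⟩
      rw [hE1]
      exact (htruth A p hpw).2 hd'
  exact h M E hemb hfalse

end MBQL
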